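/- arXiv:1602.03098 — 4 statements merged into one kernel-verified Lean document; each statement's English description precedes it below -/
import Mathlib

section
/- If G ≠ K_5 is a 5-Ore graph, then T(G) ≥ 2 + (|V(G)|−1)/4. -/
/-!
Induction along the Ore-compositions, carrying a packing of triangles and `K₄`s of weight at least
`2 + (n - 1)/4` in every 5-Ore graph other than `K₅`. Deleting one vertex costs at most one unit
of weight (a `K₄` through it shrinks to a triangle), and `K₅` minus a vertex is a `K₄`; so every
5-Ore graph has, for each vertex `v`, a packing avoiding `v` of weight at least `1 + (n - 1)/4`.
In an Ore-composition of `G₁` (edge `xy`) and `G₂` (split vertex `z`), a packing of `G₁` avoiding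
`x` survives the deletion of `xy`, a packing of `G₂` avoiding `z` survives the splitting of `z`,
and the two lie in disjoint parts of the composition; since `n = n₁ + n₂ - 1`, their weights add
up to `2 + (n - 1)/4`.
-/

open SimpleGraph

namespace Postle

noncomputable def epsC : ℝ := 1 / 21
noncomputable def delC : ℝ := 8 / 21
noncomputable def PC : ℝ := 48 / 21
noncomputable def QC : ℝ := 8 / 21

/-- The degree of a vertex, via the cardinality of its neighbor set. -/
noncomputable def degS {V : Type} (G : SimpleGraph V) (v : V) : ℕ :=
  (G.neighborSet v).ncard

/-- A graph is 5-critical if it is not 4-colorable but every proper subgraph is. -/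
def FiveCritical {V : Type} (G : SimpleGraph V) : Prop :=
  ¬ G.Colorable 4 ∧ ∀ H : SimpleGraph V, H < G → H.Colorable 4

/-- `G` is (isomorphic to) the complete graph `K₅`. -/
def IsK5 {V : Type} (G : SimpleGraph V) : Prop :=
  Nonempty (G ≃g (⊤ : SimpleGraph (Fin 5)))

/-- `T(G)`: the maximum, over collections of pairwise disjoint cliques of size 3 or 4 in `G`,
of (number of 3-cliques) + 2 * (number of 4-cliques); each clique of size `k` contributes
`k - 2`. -/
noncomputable def TT {V : Type} (G : SimpleGraph V) : ℕ :=
  sSup { n : ℕ | ∃ C : Finset (Finset V),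
    ((C : Set (Finset V)).Pairwise fun A B => Disjoint A B) ∧
    (∀ W ∈ C, G.IsClique (W : Set V) ∧ (W.card = 3 ∨ W.card = 4)) ∧
    n = ∑ W ∈ C, (W.card - 2) }

/-- The potential `p(G) = (9+ε)|V(G)| - 4|E(G)| - δ·T(G)` with `ε = 1/21`, `δ = 8/21`. -/
noncomputable def pot {V : Type} (G : SimpleGraph V) : ℝ :=
  (9 + epsC) * (Nat.card V : ℝ) - 4 * (G.edgeSet.ncard : ℝ) - delC * (TT G : ℝ)

/-- `p_G(R) = p(G[R])`. -/
noncomputable def potOn {V : Type} (G : SimpleGraph V) (R : Set V) : ℝ :=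
  pot (G.induce R)

/-- The Kostochka–Yancey potential `p_KY(G) = 9|V(G)| - 4|E(G)|`. -/
noncomputable def potKY {V : Type} (G : SimpleGraph V) : ℝ :=
  9 * (Nat.card V : ℝ) - 4 * (G.edgeSet.ncard : ℝ)

noncomputable def potKYOn {V : Type} (G : SimpleGraph V) (R : Set V) : ℝ :=
  potKY (G.induce R)

/-- `G` is an Ore-composition of `G₁` (the edge side, with replaced edge `xy`) and `G₂`
(the vertex side, with split vertex `z`): delete the edge `xy` of `G₁`, split `z` into two
vertices of positive degree, and identify them with `x` and `y`. The set `S` records which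
neighbors of `z` get attached to `x`. -/
def IsOreComposition {V V₁ V₂ : Type} (G : SimpleGraph V)
    (G₁ : SimpleGraph V₁) (G₂ : SimpleGraph V₂) : Prop :=
  ∃ (x y : V₁) (z : V₂) (f₁ : V₁ ↪ V) (f₂ : {w : V₂ // w ≠ z} ↪ V) (S : Set V₂),
    G₁.Adj x y ∧
    (∀ w ∈ S, G₂.Adj z w) ∧ S.Nonempty ∧ (G₂.neighborSet z \ S).Nonempty ∧
    Set.range ⇑f₁ ∩ Set.range ⇑f₂ = ∅ ∧
    Set.range ⇑f₁ ∪ Set.range ⇑f₂ = Set.univ ∧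
    ∀ a b : V, G.Adj a b ↔
      ((∃ a' b' : V₁, f₁ a' = a ∧ f₁ b' = b ∧ G₁.Adj a' b' ∧
          ¬(a' = x ∧ b' = y) ∧ ¬(a' = y ∧ b' = x)) ∨
       (∃ a' b' : {w : V₂ // w ≠ z}, f₂ a' = a ∧ f₂ b' = b ∧ G₂.Adj a'.1 b'.1) ∨
       (∃ w : {w : V₂ // w ≠ z}, G₂.Adj z w.1 ∧
         ((((a = f₁ x ∧ b = f₂ w) ∨ (b = f₁ x ∧ a = f₂ w)) ∧ w.1 ∈ S) ∨
          (((a = f₁ y ∧ b = f₂ w) ∨ (b = f₁ y ∧ a = f₂ w)) ∧ w.1 ∉ S))))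

/-- A graph is 5-Ore if it can be obtained from copies of `K₅` by repeated Ore-compositions. -/
inductive Is5Ore : {V : Type} → SimpleGraph V → Prop
  | k5 {V : Type} {G : SimpleGraph V} (h : IsK5 G) : Is5Ore G
  | ore {V V₁ V₂ : Type} {G : SimpleGraph V} {G₁ : SimpleGraph V₁} {G₂ : SimpleGraph V₂}
      (h₁ : Is5Ore G₁) (h₂ : Is5Ore G₂) (h : IsOreComposition G G₁ G₂) : Is5Ore G

/-- The boundary of `R`: the vertices of `R` with a neighbor outside `R`. -/
def boundary {V : Type} (G : SimpleGraph V) (R : Set V) : Set V :=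
  {v : V | v ∈ R ∧ ∃ w, w ∉ R ∧ G.Adj v w}

/-- The graph `G + uv` obtained by adding the edge `uv`. -/
noncomputable def addEdge {α : Type} (G : SimpleGraph α) (u v : α) : SimpleGraph α :=
  G ⊔ SimpleGraph.fromEdgeSet {s(u, v)}

/-- `R` is an Ore-collapsible subset of `G`: a proper subset whose boundary consists of exactly
two non-adjacent vertices `u, v` such that `G[R] + uv` is 5-Ore. -/
def OreCollapsible {V : Type} (G : SimpleGraph V) (R : Set V) : Prop :=
  R ≠ Set.univ ∧ ∃ u v : ↥R, u.1 ≠ v.1 ∧ ¬ G.Adj u.1 v.1 ∧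
    boundary G R = {u.1, v.1} ∧ Is5Ore (addEdge (G.induce R) u v)

/-- An emerald: a subgraph isomorphic to `K₄` all of whose vertices have degree 4 in `G`,
given by its vertex set. -/
def IsEmerald {V : Type} (G : SimpleGraph V) (S : Set V) : Prop :=
  S.ncard = 4 ∧ (∀ a ∈ S, ∀ b ∈ S, a ≠ b → G.Adj a b) ∧ ∀ v ∈ S, degS G v = 4

/-- A diamond: a subgraph isomorphic to `K₅ - e` in which the vertices not incident to `e`
have degree 4 in `G`, given by its vertex set. -/
def IsDiamond {V : Type} (G : SimpleGraph V) (D : Set V) : Prop :=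
  D.ncard = 5 ∧ ∃ u ∈ D, ∃ v ∈ D, u ≠ v ∧
    (∀ a ∈ D, ∀ b ∈ D, a ≠ b → ¬(a = u ∧ b = v) → ¬(a = v ∧ b = u) → G.Adj a b) ∧
    ∀ w ∈ D, w ≠ u → w ≠ v → degS G w = 4

/-- A graph is ungemmed if it contains neither a diamond nor an emerald. -/
def Ungemmed {V : Type} (G : SimpleGraph V) : Prop :=
  (¬ ∃ D : Set V, IsDiamond G D) ∧ ¬ ∃ S : Set V, IsEmerald G S

/-- `R` is collapsible: a proper subset with `|R| ≥ 5` such that in every proper 4-coloring of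
`G[R]` all boundary vertices of `R` receive the same color. -/
def Collapsible {V : Type} (G : SimpleGraph V) (R : Set V) : Prop :=
  R ≠ Set.univ ∧ 5 ≤ R.ncard ∧
    ∀ φ : (G.induce R).Coloring (Fin 4), ∀ u v : ↥R,
      u.1 ∈ boundary G R → v.1 ∈ boundary G R → φ u = φ v

/-- The critical complement of a collapsible set `R`: identify the boundary of `R` to a single
new vertex (`none`) and delete the rest of `R`. -/
noncomputable def criticalComplement {V : Type} (G : SimpleGraph V) (R : Set V) :
    SimpleGraph (Option ↥(Rᶜ)) :=
  SimpleGraph.fromRel fun a b =>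
    match a, b with
    | some w, some w' => G.Adj w.1 w'.1
    | none, some w => ∃ x ∈ boundary G R, G.Adj x w.1
    | _, _ => False

/-- The φ-identification `G_φ(R)`: vertices outside `R` together with four vertices `x_i`;
the vertices of `R` colored `i` are identified to `x_i`, and all edges `x_i x_j` are added. -/
noncomputable def phiIdent {V : Type} (G : SimpleGraph V) (R : Set V) (φ : ↥R → Fin 4) :
    SimpleGraph ((↥(Rᶜ)) ⊕ Fin 4) :=
  SimpleGraph.fromRel fun a b =>
    match a, b with
    | Sum.inl w, Sum.inl w' => G.Adj w.1 w'.1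
    | Sum.inl w, Sum.inr i => ∃ r : ↥R, φ r = i ∧ G.Adj r.1 w.1
    | Sum.inr _, Sum.inr _ => True
    | _, _ => False

/-- A critical extension of `R` in `G`: a proper 4-coloring `φ` of `G[R]` together with a
5-critical subgraph `W` of the φ-identification `G_φ(R)`, with vertex set `S`. -/
structure CriticalExtension {V : Type} (G : SimpleGraph V) (R : Set V) where
  φ : (G.induce R).Coloring (Fin 4)
  S : Set ((↥(Rᶜ)) ⊕ Fin 4)
  W : SimpleGraph ↥S
  le : W ≤ (phiIdent G R ⇑φ).induce S
  crit : FiveCritical W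

/-- The critical extension `R' = (V(W) - V(X)) ∪ R` of `R`. -/
noncomputable def CriticalExtension.verts {V : Type} {G : SimpleGraph V} {R : Set V}
    (E : CriticalExtension G R) : Set V :=
  R ∪ {v : V | ∃ h : v ∈ Rᶜ, Sum.inl (⟨v, h⟩ : ↥(Rᶜ)) ∈ E.S}

/-- The size `|X|` of the core `W ∩ X` of the extension. -/
noncomputable def CriticalExtension.coreCard {V : Type} {G : SimpleGraph V} {R : Set V}
    (E : CriticalExtension G R) : ℕ :=
  {i : Fin 4 | Sum.inr i ∈ E.S}.ncard

/-- The graph `W - X` obtained from the extender `W` by deleting the core vertices. -/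
noncomputable def CriticalExtension.WminusX {V : Type} {G : SimpleGraph V} {R : Set V}
    (E : CriticalExtension G R) :=
  E.W.induce {w : ↥E.S | w.1.isLeft = true}

/-- `f(n) = (9+ε)n - 4·C(n,2)`. -/
noncomputable def fExt (n : ℕ) : ℝ := (9 + epsC) * (n : ℝ) - 4 * ((n.choose 2 : ℕ) : ℝ)

/-- The closed neighborhood of a vertex. -/
def closedNbhd {V : Type} (G : SimpleGraph V) (v : V) : Set V :=
  insert v (G.neighborSet v)

/-- A cluster: a maximal set of degree-four vertices with the same closed neighborhood. -/
def IsCluster {V : Type} (G : SimpleGraph V) (C : Set V) : Prop :=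
  C.Nonempty ∧ (∀ v ∈ C, degS G v = 4) ∧
  (∀ u ∈ C, ∀ v ∈ C, closedNbhd G u = closedNbhd G v) ∧
  ∀ C' : Set V, C ⊆ C' → (∀ v ∈ C', degS G v = 4) →
    (∀ u ∈ C', ∀ v ∈ C', closedNbhd G u = closedNbhd G v) → C' = C

open Classical in
/-- The list of cluster sizes of `G`, in decreasing order. -/
noncomputable def clusterList {V : Type} [Fintype V] (G : SimpleGraph V) : List ℕ :=
  ((((Finset.univ : Finset V).filter fun v => degS G v = 4).image
      fun v => (Finset.univ : Finset V).filter
        fun u => degS G u = 4 ∧ closedNbhd G u = closedNbhd G v).val.map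
    Finset.card).sort (· ≤ ·) |>.reverse

/-- `H` is smaller than `G`: fewer vertices; or the same number of vertices and more edges; or
the same number of vertices and edges and `H` precedes `G` in the lexicographic ordering of
cluster sizes listed in decreasing order. -/
def Smaller {V₁ V₂ : Type} [Fintype V₁] [Fintype V₂]
    (H : SimpleGraph V₁) (G : SimpleGraph V₂) : Prop :=
  Nat.card V₁ < Nat.card V₂ ∨
  (Nat.card V₁ = Nat.card V₂ ∧ G.edgeSet.ncard < H.edgeSet.ncard) ∨
  (Nat.card V₁ = Nat.card V₂ ∧ H.edgeSet.ncard = G.edgeSet.ncard ∧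
    List.Lex (· > ·) (clusterList H) (clusterList G))

/-- A 5-critical graph `G` is good if every smaller 5-critical graph satisfies the conclusion
of the main theorem. -/
def Good {V : Type} [Fintype V] (G : SimpleGraph V) : Prop :=
  FiveCritical G ∧
    ∀ (V' : Type) [Fintype V'] (H : SimpleGraph V'), FiveCritical H → Smaller H G →
      (IsK5 H → pot H = 5 + 5 * epsC - 2 * delC) ∧
      (Is5Ore H → ¬ IsK5 H →
        pot H ≤ 5 + (Nat.card V' : ℝ) * epsC - (2 + ((Nat.card V' : ℝ) - 1) / 4) * delC) ∧
      (¬ Is5Ore H → pot H ≤ 5 - PC)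

/-- `G` is tight if it is good and `p(G) ≥ 5 - P - Q`. -/
def Tight {V : Type} [Fintype V] (G : SimpleGraph V) : Prop :=
  Good G ∧ pot G ≥ 5 - PC - QC

/-- `u, v` is an identifiable pair in a proper subset `R`: `G[R] + uv` is not 4-colorable. -/
def IdentifiablePair {V : Type} (G : SimpleGraph V) (R : Set V) (u v : ↥R) : Prop :=
  R ≠ Set.univ ∧ ¬ (addEdge (G.induce R) u v).Colorable 4

end Postle

namespace SimpleGraph

variable {V W : Type*}

/-- The vertex sets of the subgraphs `H` in the definition of `T(G)`. -/
structure IsCliquePacking (G : SimpleGraph V) (C : Finset (Finset V)) : Prop where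
  pairwiseDisjoint : (C : Set (Finset V)).Pairwise Disjoint
  isClique : ∀ A ∈ C, G.IsClique (A : Set V)
  card_mem : ∀ A ∈ C, A.card = 3 ∨ A.card = 4

def packingWeight (C : Finset (Finset V)) : ℕ := ∑ A ∈ C, (A.card - 2)

lemma packingWeight_singleton (A : Finset V) : packingWeight {A} = A.card - 2 :=
  Finset.sum_singleton _ _

lemma packingWeight_image [DecidableEq W] {C : Finset (Finset V)} {s : Set V}
    (hs : ∀ A ∈ C, (A : Set V) ⊆ s) {f : V → W} (hf : Set.InjOn f s) :
    packingWeight (C.image (Finset.image f)) = packingWeight C := by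
  unfold packingWeight
  rw [Finset.sum_image fun A hA B hB hAB => Finset.coe_injective <|
    (hf.image_eq_image_iff (hs A hA) (hs B hB)).mp
      (by simpa using congrArg (fun A : Finset W => (A : Set W)) hAB)]
  exact Finset.sum_congr rfl fun A hA => by rw [Finset.card_image_of_injOn (hf.mono (hs A hA))]

lemma isCliquePacking_singleton {G : SimpleGraph V} {A : Finset V} (hA : G.IsClique (A : Set V))
    (hcard : A.card = 3 ∨ A.card = 4) : G.IsCliquePacking {A} :=
  ⟨by simp, by simpa using hA, by simpa using hcard⟩

namespace IsCliquePacking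

variable {G : SimpleGraph V} {C D : Finset (Finset V)}

lemma nonempty (hC : G.IsCliquePacking C) {A : Finset V} (hA : A ∈ C) : A.Nonempty :=
  Finset.card_pos.mp (by rcases hC.card_mem A hA with h | h <;> omega)

lemma mono (hC : G.IsCliquePacking C) (hDC : D ⊆ C) : G.IsCliquePacking D :=
  ⟨hC.pairwiseDisjoint.mono (by simpa using hDC), fun A hA => hC.isClique A (hDC hA),
    fun A hA => hC.card_mem A (hDC hA)⟩

lemma union [DecidableEq V] (hC : G.IsCliquePacking C) (hD : G.IsCliquePacking D)
    (hCD : ∀ A ∈ C, ∀ B ∈ D, Disjoint A B) : G.IsCliquePacking (C ∪ D) where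
  pairwiseDisjoint := by
    rw [Finset.coe_union, Set.pairwise_union_of_symm]
    exact ⟨hC.pairwiseDisjoint, hD.pairwiseDisjoint, fun A hA B hB _ => hCD A hA B hB⟩
  isClique A hA := (Finset.mem_union.mp hA).elim (hC.isClique A) (hD.isClique A)
  card_mem A hA := (Finset.mem_union.mp hA).elim (hC.card_mem A) (hD.card_mem A)

lemma packingWeight_union [DecidableEq V] (hC : G.IsCliquePacking C)
    (hCD : ∀ A ∈ C, ∀ B ∈ D, Disjoint A B) :
    packingWeight (C ∪ D) = packingWeight C + packingWeight D :=
  Finset.sum_union <| Finset.disjoint_left.mpr fun A hAC hAD =>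
    (hC.nonempty hAC).ne_empty (disjoint_self.mp (hCD A hAC A hAD))

lemma image [DecidableEq W] {H : SimpleGraph W} (hC : G.IsCliquePacking C) {s : Set V}
    (hs : ∀ A ∈ C, (A : Set V) ⊆ s) {f : V → W} (hf : Set.InjOn f s)
    (hadj : ∀ a ∈ s, ∀ b ∈ s, G.Adj a b → H.Adj (f a) (f b)) :
    H.IsCliquePacking (C.image (Finset.image f)) where
  pairwiseDisjoint := by
    intro _ hA' _ hB' hAB
    obtain ⟨A, hA, rfl⟩ := Finset.mem_image.mp hA'
    obtain ⟨B, hB, rfl⟩ := Finset.mem_image.mp hB'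
    have hAB' : A ≠ B := fun h => hAB (by rw [h])
    rw [← Finset.disjoint_coe, Finset.coe_image, Finset.coe_image,
      Set.disjoint_iff_inter_eq_empty, ← hf.image_inter (hs A hA) (hs B hB),
      Set.disjoint_iff_inter_eq_empty.mp (Finset.disjoint_coe.mpr
        (hC.pairwiseDisjoint hA hB hAB')), Set.image_empty]
  isClique := by
    intro _ hA' _ ha' _ hb' hne
    obtain ⟨A, hA, rfl⟩ := Finset.mem_image.mp hA'
    obtain ⟨a, ha, rfl⟩ := Finset.mem_image.mp ha'
    obtain ⟨b, hb, rfl⟩ := Finset.mem_image.mp hb'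
    exact hadj a (hs A hA ha) b (hs A hA hb)
      (hC.isClique A hA ha hb fun h => hne (by rw [h]))
  card_mem := by
    rintro _ hA'
    obtain ⟨A, hA, rfl⟩ := Finset.mem_image.mp hA'
    rw [Finset.card_image_of_injOn (hf.mono (hs A hA))]
    exact hC.card_mem A hA

lemma exists_avoiding [DecidableEq V] (hC : G.IsCliquePacking C) (v : V) :
    ∃ D, G.IsCliquePacking D ∧ (∀ A ∈ D, v ∉ A) ∧ packingWeight C ≤ packingWeight D + 1 := by
  by_cases hv : ∃ A ∈ C, v ∈ A
  swap
  · push Not at hv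
    exact ⟨C, hC, hv, by omega⟩
  obtain ⟨A, hA, hvA⟩ := hv
  have hrest : G.IsCliquePacking (C.erase A) := hC.mono (Finset.erase_subset _ _)
  have hdisj : ∀ B ∈ C.erase A, Disjoint A B := fun B hB =>
    hC.pairwiseDisjoint hA (Finset.mem_of_mem_erase hB) (Finset.ne_of_mem_erase hB).symm
  have hrest_avoid : ∀ B ∈ C.erase A, v ∉ B := fun B hB =>
    Finset.disjoint_left.mp (hdisj B hB) hvA
  have hweight : packingWeight C = packingWeight (C.erase A) + (A.card - 2) :=
    (Finset.sum_erase_add C _ hA).symm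
  rcases hC.card_mem A hA with h3 | h4
  · exact ⟨C.erase A, hrest, hrest_avoid, by omega⟩
  -- a `K₄` through `v` is replaced by the triangle that remains after deleting `v`
  have hcard : (A.erase v).card = 3 := by rw [Finset.card_erase_of_mem hvA, h4]
  have hdisj' : ∀ B ∈ C.erase A, Disjoint (A.erase v) B := fun B hB =>
    (hdisj B hB).mono_left (Finset.erase_subset _ _)
  have hsingle : G.IsCliquePacking {A.erase v} :=
    isCliquePacking_singleton ((hC.isClique A hA).subset (by simp)) (Or.inl hcard)
  refine ⟨{A.erase v} ∪ C.erase A, hsingle.union hrest (by simpa using hdisj'), ?_, ?_⟩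
  · simpa using hrest_avoid
  · rw [hsingle.packingWeight_union (by simpa using hdisj'), packingWeight_singleton, hcard]
    omega

end IsCliquePacking

end SimpleGraph

namespace Postle

lemma packingWeight_le_TT {V : Type} [Finite V] {G : SimpleGraph V} {C : Finset (Finset V)}
    (hC : G.IsCliquePacking C) : packingWeight C ≤ TT G := by
  classical
  have := Fintype.ofFinite V
  refine le_csSup ⟨Fintype.card V, ?_⟩
    ⟨C, hC.pairwiseDisjoint, fun A hA => ⟨hC.isClique A hA, hC.card_mem A hA⟩, rfl⟩
  rintro n ⟨D, hD, -, rfl⟩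
  calc ∑ A ∈ D, (A.card - 2) ≤ ∑ A ∈ D, A.card := Finset.sum_le_sum fun _ _ => Nat.sub_le _ _
    _ = (D.biUnion id).card := (Finset.card_biUnion hD).symm
    _ ≤ Fintype.card V := Finset.card_le_univ _

section K5

variable {V : Type} {G : SimpleGraph V}

lemma IsK5.finite (h : IsK5 G) : Finite V :=
  Finite.of_equiv (Fin 5) (Classical.choice h).symm.toEquiv

lemma IsK5.card (h : IsK5 G) : Nat.card V = 5 := by
  obtain ⟨e⟩ := h
  rw [Nat.card_congr e.toEquiv, Nat.card_eq_fintype_card, Fintype.card_fin]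

lemma IsK5.adj (h : IsK5 G) {a b : V} (hab : a ≠ b) : G.Adj a b := by
  obtain ⟨e⟩ := h
  exact e.map_adj_iff.mp ((top_adj _ _).mpr (e.injective.ne hab))

lemma IsK5.exists_cliquePacking_avoiding (h : IsK5 G) (v : V) :
    ∃ C, G.IsCliquePacking C ∧ (∀ A ∈ C, v ∉ A) ∧ packingWeight C = 2 := by
  classical
  have := h.finite
  have := Fintype.ofFinite V
  have hcard : (Finset.univ.erase v).card = 4 := by
    rw [Finset.card_erase_of_mem (Finset.mem_univ v), Finset.card_univ,
      ← Nat.card_eq_fintype_card, h.card]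
  refine ⟨{Finset.univ.erase v},
    isCliquePacking_singleton (fun a _ b _ hab => h.adj hab) (Or.inr hcard), by simp, ?_⟩
  rw [packingWeight_singleton, hcard]

end K5

lemma Is5Ore.finite {V : Type} {G : SimpleGraph V} (h : Is5Ore G) : Finite V := by
  induction h with
  | k5 h => exact h.finite
  | ore _ _ h =>
    obtain ⟨_, _, _, f₁, f₂, _, _, _, _, _, _, huniv, _⟩ := h
    rw [← Set.finite_univ_iff, ← huniv]
    exact (Set.finite_range f₁).union (Set.finite_range f₂)

section OreComposition

variable {V V₁ V₂ : Type} {G : SimpleGraph V} {G₁ : SimpleGraph V₁} {G₂ : SimpleGraph V₂}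

lemma IsOreComposition.card_add_one [Finite V₁] [Finite V₂]
    (h : IsOreComposition G G₁ G₂) : Nat.card V + 1 = Nat.card V₁ + Nat.card V₂ := by
  classical
  obtain ⟨_, _, z, f₁, f₂, _, _, _, _, _, hdisj, huniv, _⟩ := h
  have hinj : Function.Injective (Sum.elim f₁ f₂) :=
    f₁.injective.sumElim f₂.injective fun a b hab =>
      (Set.eq_empty_iff_forall_notMem.mp hdisj) _ ⟨⟨a, rfl⟩, ⟨b, hab.symm⟩⟩
  have hsurj : Function.Surjective (Sum.elim f₁ f₂) := by
    rw [← Set.range_eq_univ, Set.Sum.elim_range, huniv]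
  rw [← Nat.card_congr (Equiv.ofBijective _ ⟨hinj, hsurj⟩), Nat.card_sum,
    add_assoc, ← Finite.card_option, Nat.card_congr (Equiv.optionSubtypeNe z)]

lemma IsOreComposition.exists_cliquePacking (h : IsOreComposition G G₁ G₂) {k₁ k₂ : ℝ}
    (h₁ : ∀ v, ∃ C, G₁.IsCliquePacking C ∧ (∀ A ∈ C, v ∉ A) ∧ k₁ ≤ packingWeight C)
    (h₂ : ∀ v, ∃ C, G₂.IsCliquePacking C ∧ (∀ A ∈ C, v ∉ A) ∧ k₂ ≤ packingWeight C) :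
    ∃ C, G.IsCliquePacking C ∧ k₁ + k₂ ≤ packingWeight C := by
  classical
  obtain ⟨x, y, z, f₁, f₂, _, _, _, _, _, hdisj, _, hadj⟩ := h
  obtain ⟨C₁, hC₁, hx, hw₁⟩ := h₁ x
  obtain ⟨C₂, hC₂, hz, hw₂⟩ := h₂ z
  let g : V₂ → V := fun w => if hw : w = z then f₁ x else f₂ ⟨w, hw⟩
  have hg : ∀ w (hw : w ≠ z), g w = f₂ ⟨w, hw⟩ := fun w hw => dif_neg hw
  have hs₁ : ∀ A ∈ C₁, (A : Set V₁) ⊆ {x}ᶜ := fun A hA a ha hax => hx A hA (hax ▸ ha)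
  have hs₂ : ∀ A ∈ C₂, (A : Set V₂) ⊆ {z}ᶜ := fun A hA a ha haz => hz A hA (haz ▸ ha)
  have hinj₁ : Set.InjOn f₁ {x}ᶜ := f₁.injective.injOn
  have hinj₂ : Set.InjOn g {z}ᶜ := fun a ha b hb hab => by
    rw [hg a ha, hg b hb] at hab
    exact congrArg Subtype.val (f₂.injective hab)
  have hadj₁ : ∀ a ∈ ({x}ᶜ : Set V₁), ∀ b ∈ ({x}ᶜ : Set V₁), G₁.Adj a b → G.Adj (f₁ a) (f₁ b) :=
    fun a ha b hb hab => (hadj _ _).mpr (Or.inl ⟨a, b, rfl, rfl, hab, fun h => ha h.1,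
      fun h => hb h.2⟩)
  have hadj₂ : ∀ a ∈ ({z}ᶜ : Set V₂), ∀ b ∈ ({z}ᶜ : Set V₂), G₂.Adj a b → G.Adj (g a) (g b) :=
    fun a ha b hb hab => (hadj _ _).mpr (Or.inr (Or.inl ⟨⟨a, ha⟩, ⟨b, hb⟩, (hg a ha).symm,
      (hg b hb).symm, hab⟩))
  have hcross : ∀ A ∈ C₁.image (Finset.image f₁), ∀ B ∈ C₂.image (Finset.image g),
      Disjoint A B := by
    intro _ hA' _ hB'
    obtain ⟨A, hA, rfl⟩ := Finset.mem_image.mp hA'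
    obtain ⟨B, hB, rfl⟩ := Finset.mem_image.mp hB'
    rw [← Finset.disjoint_coe, Finset.coe_image, Finset.coe_image]
    refine (Set.disjoint_iff_inter_eq_empty.mpr hdisj).mono (Set.image_subset_range _ _) ?_
    rintro _ ⟨b, hb, rfl⟩
    exact ⟨⟨b, hs₂ B hB hb⟩, (hg b (hs₂ B hB hb)).symm⟩
  have hD₁ := hC₁.image hs₁ hinj₁ hadj₁
  refine ⟨_, hD₁.union (hC₂.image hs₂ hinj₂ hadj₂) hcross, ?_⟩
  rw [hD₁.packingWeight_union hcross, packingWeight_image hs₁ hinj₁,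
    packingWeight_image hs₂ hinj₂]
  push_cast
  linarith

end OreComposition

section FiveOre

variable {V : Type} {G : SimpleGraph V}

lemma exists_cliquePacking_avoiding_of_isK5_or
    (h : IsK5 G ∨ ∃ C, G.IsCliquePacking C ∧ 2 + ((Nat.card V : ℝ) - 1) / 4 ≤ packingWeight C)
    (v : V) :
    ∃ C, G.IsCliquePacking C ∧ (∀ A ∈ C, v ∉ A) ∧
      1 + ((Nat.card V : ℝ) - 1) / 4 ≤ packingWeight C := by
  classical
  rcases h with hK | ⟨C, hC, hw⟩
  · obtain ⟨C, hC, hv, hw⟩ := hK.exists_cliquePacking_avoiding v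
    refine ⟨C, hC, hv, ?_⟩
    rw [hK.card, hw]
    norm_num
  · obtain ⟨D, hD, hv, hCD⟩ := hC.exists_avoiding v
    refine ⟨D, hD, hv, ?_⟩
    have : (packingWeight C : ℝ) ≤ packingWeight D + 1 := by exact_mod_cast hCD
    linarith

lemma Is5Ore.isK5_or_exists_cliquePacking (h : Is5Ore G) :
    IsK5 G ∨ ∃ C, G.IsCliquePacking C ∧ 2 + ((Nat.card V : ℝ) - 1) / 4 ≤ packingWeight C := by
  induction h with
  | k5 hK => exact Or.inl hK
  | ore h₁ h₂ hcomp ih₁ ih₂ =>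
    have := h₁.finite
    have := h₂.finite
    obtain ⟨C, hC, hw⟩ := hcomp.exists_cliquePacking
      (exists_cliquePacking_avoiding_of_isK5_or ih₁) (exists_cliquePacking_avoiding_of_isK5_or ih₂)
    have hcard := congrArg (Nat.cast (R := ℝ)) hcomp.card_add_one
    push_cast at hcard
    exact Or.inr ⟨C, hC, by linarith⟩

end FiveOre

theorem stmt_2_general {V : Type} (G : SimpleGraph V)
    (h5 : Is5Ore G) (hK : ¬ IsK5 G) :
    (TT G : ℝ) ≥ 2 + ((Nat.card V : ℝ) - 1) / 4 := by
  have := h5.finite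
  obtain ⟨C, hC, hw⟩ := h5.isK5_or_exists_cliquePacking.resolve_left hK
  exact hw.trans (by exact_mod_cast packingWeight_le_TT hC)

/-- If `G ≠ K₅` is 5-Ore, then `T(G) ≥ 2 + (|V(G)|-1)/4`. -/
theorem stmt_2 {V : Type} [Fintype V] (G : SimpleGraph V)
    (h5 : Is5Ore G) (hK : ¬ IsK5 G) :
    (TT G : ℝ) ≥ 2 + ((Nat.card V : ℝ) - 1) / 4 :=
  stmt_2_general G h5 hK

end Postle
end

section
/- If G is the Ore-composition of two graphs G1 and G2, then T(G) ≥ T(G1) + T(G2) − 2. Furthermore, if G2 = K_5, then T(G) ≥ T(G1) + 1. -/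
open SimpleGraph

namespace Postle

/-!
The Ore composition `G` contains disjoint copies of `G₁ - xy` and of `G₂ - z`, so clique
packings of these two graphs combine into a packing of `G`. Deleting an edge or a vertex meets
at most one clique of a packing, which then loses a vertex (a `K₄`) or is dropped (a `K₃`), so
the weight goes down by at most one; hence `T(G) ≥ (T(G₁) - 1) + (T(G₂) - 1)`. When `G₂ = K₅`,
the graph `G₂ - z = K₄` alone has `T = 2`.
-/

section CliquePacking

variable {V V' : Type*}

/-- A packing `C` is the graph `H` of the definition of `T(G)`, given by the vertex sets of its
components, and `packingWeight C` is `T(H)`. -/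
def IsCliquePacking (G : SimpleGraph V) (C : Finset (Finset V)) : Prop :=
  ((C : Set (Finset V)).Pairwise fun A B => Disjoint A B) ∧
    ∀ W ∈ C, G.IsClique (W : Set V) ∧ (W.card = 3 ∨ W.card = 4)

def packingWeight (C : Finset (Finset V)) : ℕ :=
  ∑ W ∈ C, (W.card - 2)

variable {G : SimpleGraph V} {C : Finset (Finset V)}

lemma IsCliquePacking.mono {C' : Finset (Finset V)} (hC : IsCliquePacking G C) (h : C' ⊆ C) :
    IsCliquePacking G C' :=
  ⟨hC.1.mono (by simpa using h), fun W hW => hC.2 W (h hW)⟩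

lemma IsCliquePacking.weight_le_card [Finite V] (hC : IsCliquePacking G C) :
    packingWeight C ≤ Nat.card V := by
  classical
  have := Fintype.ofFinite V
  calc packingWeight C ≤ ∑ W ∈ C, W.card := Finset.sum_le_sum fun W _ => Nat.sub_le _ _
    _ = (C.biUnion id).card := (Finset.card_biUnion hC.1).symm
    _ ≤ Nat.card V := Nat.card_eq_fintype_card (α := V) ▸ Finset.card_le_univ _

lemma packingWeight_map (f : V ↪ V') :
    packingWeight (C.map (Finset.mapEmbedding f).toEmbedding) = packingWeight C := by
  simp [packingWeight, Finset.card_map]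

lemma IsCliquePacking.map {B : SimpleGraph V'} (hC : IsCliquePacking G C) (f : G.Copy B) :
    IsCliquePacking B (C.map (Finset.mapEmbedding f.toEmbedding).toEmbedding) := by
  refine ⟨?_, ?_⟩
  · rw [Finset.coe_map,
      (Finset.mapEmbedding f.toEmbedding).toEmbedding.injective.injOn.pairwise_image]
    exact hC.1.mono' fun P Q h => (Finset.disjoint_map _).mpr h
  · simp only [Finset.forall_mem_map, RelEmbedding.coe_toEmbedding, Finset.mapEmbedding_apply,
      Finset.coe_map, Finset.card_map]
    intro W hW
    refine ⟨?_, (hC.2 W hW).2⟩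
    rintro _ ⟨a, ha, rfl⟩ _ ⟨b, hb, rfl⟩ hne
    exact f.toHom.map_adj ((hC.2 W hW).1 ha hb fun h => hne (congrArg _ h))

lemma IsCliquePacking.union [DecidableEq V] {C₁ C₂ : Finset (Finset V)}
    (h₁ : IsCliquePacking G C₁) (h₂ : IsCliquePacking G C₂) (h : ∀ P ∈ C₁, ∀ Q ∈ C₂, Disjoint P Q) :
    IsCliquePacking G (C₁ ∪ C₂) := by
  refine ⟨?_, fun W hW => (Finset.mem_union.mp hW).elim (h₁.2 W) (h₂.2 W)⟩
  rw [Finset.coe_union, Set.pairwise_union_of_symm]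
  exact ⟨h₁.1, h₂.1, fun P hP Q hQ _ => h P hP Q hQ⟩

lemma packingWeight_union [DecidableEq V] {C₁ C₂ : Finset (Finset V)}
    (h₁ : IsCliquePacking G C₁) (h : ∀ P ∈ C₁, ∀ Q ∈ C₂, Disjoint P Q) :
    packingWeight (C₁ ∪ C₂) = packingWeight C₁ + packingWeight C₂ := by
  refine Finset.sum_union (Finset.disjoint_left.mpr fun P hP₁ hP₂ => ?_)
  have hP : P = ∅ := disjoint_self.mp (h P hP₁ P hP₂)
  rcases (h₁.2 P hP₁).2 with hc | hc <;> simp [hP] at hc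

lemma mem_range_of_mem_of_mem_map (f : V ↪ V') {P : Finset V'}
    (hP : P ∈ C.map (Finset.mapEmbedding f).toEmbedding) {v : V'} (hv : v ∈ P) :
    v ∈ Set.range f := by
  obtain ⟨W, -, rfl⟩ := Finset.mem_map.mp hP
  obtain ⟨a, -, rfl⟩ := Finset.mem_map.mp hv
  exact ⟨a, rfl⟩

lemma IsCliquePacking.exists_notMem (hC : IsCliquePacking G C) (v : V) :
    ∃ C', IsCliquePacking G C' ∧ (∀ W ∈ C', v ∉ W) ∧ packingWeight C ≤ packingWeight C' + 1 := by
  classical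
  by_cases hv : ∃ W₀ ∈ C, v ∈ W₀
  swap
  · exact ⟨C, hC, fun W hW hvW => hv ⟨W, hW, hvW⟩, Nat.le_succ _⟩
  obtain ⟨W₀, hW₀, hvW₀⟩ := hv
  have hrest : ∀ W ∈ C.erase W₀, Disjoint W₀ W := fun W hW =>
    hC.1 hW₀ (Finset.mem_of_mem_erase hW) (Finset.ne_of_mem_erase hW).symm
  have hsplit : packingWeight C = (W₀.card - 2) + packingWeight (C.erase W₀) :=
    (Finset.add_sum_erase C _ hW₀).symm
  have hrest_v : ∀ W ∈ C.erase W₀, v ∉ W := fun W hW =>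
    Finset.disjoint_left.mp (hrest W hW) hvW₀
  rcases (hC.2 W₀ hW₀).2 with h3 | h4
  · refine ⟨C.erase W₀, hC.mono (Finset.erase_subset _ _), hrest_v, ?_⟩
    omega
  · have hcard : (W₀.erase v).card = 3 := by rw [Finset.card_erase_of_mem hvW₀, h4]
    have hnew : W₀.erase v ∉ C.erase W₀ := fun hmem => by
      obtain ⟨a, ha⟩ := Finset.card_pos.mp (by omega : 0 < (W₀.erase v).card)
      exact Finset.disjoint_left.mp (hrest _ hmem) (Finset.mem_of_mem_erase ha) ha
    refine ⟨insert (W₀.erase v) (C.erase W₀), ⟨?_, ?_⟩, ?_, ?_⟩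
    · rw [Finset.coe_insert, Set.pairwise_insert_of_symm]
      exact ⟨(hC.mono (Finset.erase_subset _ _)).1, fun W hW _ =>
        (hrest W hW).mono_left (Finset.erase_subset _ _)⟩
    · intro W hW
      rcases Finset.mem_insert.mp hW with rfl | hW
      · exact ⟨(hC.2 W₀ hW₀).1.subset (by simp), Or.inl hcard⟩
      · exact hC.2 W (Finset.mem_of_mem_erase hW)
    · intro W hW
      rcases Finset.mem_insert.mp hW with rfl | hW
      · exact Finset.notMem_erase v W₀
      · exact hrest_v W hW
    · have hins : packingWeight (insert (W₀.erase v) (C.erase W₀)) =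
          1 + packingWeight (C.erase W₀) := by
        rw [packingWeight, Finset.sum_insert hnew, hcard]
        rfl
      omega

lemma IsCliquePacking.exists_induce {s : Set V} (hC : IsCliquePacking G C)
    (hs : ∀ W ∈ C, ∀ v ∈ W, v ∈ s) :
    ∃ C' : Finset (Finset s), IsCliquePacking (G.induce s) C' ∧
      packingWeight C' = packingWeight C := by
  classical
  refine ⟨C.image (Finset.subtype (· ∈ s)), ⟨?_, ?_⟩, ?_⟩
  · rintro P' hP' Q' hQ' hne
    obtain ⟨P, hP, rfl⟩ := Finset.mem_image.mp hP'
    obtain ⟨Q, hQ, rfl⟩ := Finset.mem_image.mp hQ'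
    exact Finset.disjoint_left.mpr fun a haP haQ => Finset.disjoint_left.mp
      (hC.1 hP hQ fun h => hne (congrArg _ h)) (Finset.mem_subtype.mp haP)
      (Finset.mem_subtype.mp haQ)
  · simp only [Finset.forall_mem_image]
    intro W hW
    refine ⟨fun a ha b hb hne => (hC.2 W hW).1 (Finset.mem_subtype.mp ha)
      (Finset.mem_subtype.mp hb) (Subtype.coe_injective.ne hne), ?_⟩
    rw [Finset.card_subtype, Finset.filter_true_of_mem (hs W hW)]
    exact (hC.2 W hW).2
  · rw [← packingWeight_map (Function.Embedding.subtype (· ∈ s))]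
    congr 1
    ext W
    simp only [Finset.mem_map, Finset.mem_image, RelEmbedding.coe_toEmbedding,
      Finset.mapEmbedding_apply]
    constructor
    · rintro ⟨_, ⟨W', hW', rfl⟩, rfl⟩
      rwa [Finset.subtype_map_of_mem (hs W' hW')]
    · exact fun hW => ⟨_, ⟨W, hW, rfl⟩, Finset.subtype_map_of_mem (hs W hW)⟩

end CliquePacking

section TT

variable {V V₁ V₂ : Type} {G : SimpleGraph V}

lemma le_TT [Finite V] {C : Finset (Finset V)} (hC : IsCliquePacking G C) :
    packingWeight C ≤ TT G := by
  rw [TT]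
  refine le_csSup ⟨Nat.card V, ?_⟩ ⟨C, hC.1, hC.2, rfl⟩
  rintro _ ⟨C, hd, hcl, rfl⟩
  exact IsCliquePacking.weight_le_card ⟨hd, hcl⟩

/-- Without finiteness the supremum defining `TT` may be unbounded, and then it is the junk
value `0`, still attained by the empty packing. -/
lemma exists_isCliquePacking_weight_eq_TT (G : SimpleGraph V) :
    ∃ C, IsCliquePacking G C ∧ packingWeight C = TT G := by
  by_cases hbdd : BddAbove {n : ℕ | ∃ C : Finset (Finset V),
      ((C : Set (Finset V)).Pairwise fun A B => Disjoint A B) ∧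
      (∀ W ∈ C, G.IsClique (W : Set V) ∧ (W.card = 3 ∨ W.card = 4)) ∧
      n = ∑ W ∈ C, (W.card - 2)}
  · obtain ⟨C, hd, hcl, hn⟩ := Nat.sSup_mem (by exact ⟨0, ∅, by simp, by simp, by simp⟩) hbdd
    exact ⟨C, ⟨hd, hcl⟩, hn.symm⟩
  · refine ⟨∅, ⟨by simp, by simp⟩, ?_⟩
    rw [TT, Nat.sSup_of_not_bddAbove hbdd]
    rfl

lemma TT_add_TT_le [Finite V] {A : SimpleGraph V₁} {B : SimpleGraph V₂}
    (f : A.Copy G) (g : B.Copy G) (hfg : Disjoint (Set.range f) (Set.range g)) :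
    TT A + TT B ≤ TT G := by
  classical
  obtain ⟨CA, hCA, hA⟩ := exists_isCliquePacking_weight_eq_TT A
  obtain ⟨CB, hCB, hB⟩ := exists_isCliquePacking_weight_eq_TT B
  set DA := CA.map (Finset.mapEmbedding f.toEmbedding).toEmbedding
  set DB := CB.map (Finset.mapEmbedding g.toEmbedding).toEmbedding
  have hdisj : ∀ P ∈ DA, ∀ Q ∈ DB, Disjoint P Q :=
    fun P hP Q hQ => Finset.disjoint_left.mpr fun v hvP hvQ => Set.disjoint_left.mp hfg
      (mem_range_of_mem_of_mem_map _ hP hvP) (mem_range_of_mem_of_mem_map _ hQ hvQ)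
  calc TT A + TT B = packingWeight DA + packingWeight DB := by
        rw [packingWeight_map, packingWeight_map, hA, hB]
    _ = packingWeight _ := (packingWeight_union (hCA.map f) hdisj).symm
    _ ≤ TT G := le_TT ((hCA.map f).union (hCB.map g) hdisj)

lemma TT_le_TT_deleteEdges_add_one [Finite V] (G : SimpleGraph V) (x y : V) :
    TT G ≤ TT (G.deleteEdges {s(x, y)}) + 1 := by
  obtain ⟨C, hC, hT⟩ := exists_isCliquePacking_weight_eq_TT G
  obtain ⟨C', hC', hx, hle⟩ := hC.exists_notMem x
  have hC'' : IsCliquePacking (G.deleteEdges {s(x, y)}) C' := by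
    refine ⟨hC'.1, fun W hW => ⟨fun a ha b hb hne => ?_, (hC'.2 W hW).2⟩⟩
    refine (deleteEdges_adj ..).mpr ⟨(hC'.2 W hW).1 ha hb hne, fun hab => ?_⟩
    rcases Sym2.eq_iff.mp (Set.mem_singleton_iff.mp hab) with ⟨rfl, -⟩ | ⟨-, rfl⟩
    exacts [hx W hW ha, hx W hW hb]
  exact hT ▸ hle.trans (Nat.add_le_add_right (le_TT hC'') 1)

lemma TT_le_TT_induce_add_one [Finite V] (G : SimpleGraph V) (v : V) :
    TT G ≤ TT (G.induce {w | w ≠ v}) + 1 := by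
  obtain ⟨C, hC, hT⟩ := exists_isCliquePacking_weight_eq_TT G
  obtain ⟨C', hC', hv, hle⟩ := hC.exists_notMem v
  obtain ⟨D, hD, hDw⟩ := hC'.exists_induce (s := {w | w ≠ v})
    fun W hW w hw => fun h => hv W hW (h ▸ hw)
  exact hT ▸ hle.trans (Nat.add_le_add_right (hDw ▸ le_TT hD) 1)

lemma two_le_TT_of_isNClique [Finite V] {s : Finset V} (hs : G.IsNClique 4 s) : 2 ≤ TT G := by
  have hpack : IsCliquePacking G {s} := ⟨by simp, by simp [hs.isClique, hs.card_eq]⟩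
  simpa [packingWeight, hs.card_eq] using le_TT hpack

end TT

lemma IsOreComposition.exists_disjoint_copies {V V₁ V₂ : Type} {G : SimpleGraph V}
    {G₁ : SimpleGraph V₁} {G₂ : SimpleGraph V₂} (h : IsOreComposition G G₁ G₂) :
    ∃ (x y : V₁) (z : V₂) (c₁ : (G₁.deleteEdges {s(x, y)}).Copy G)
      (c₂ : (G₂.induce {w | w ≠ z}).Copy G), Disjoint (Set.range c₁) (Set.range c₂) := by
  obtain ⟨x, y, z, f₁, f₂, _, -, -, -, -, hdisj, -, hadj⟩ := h
  refine ⟨x, y, z, ⟨⟨f₁, fun {a b} hab => ?_⟩, f₁.injective⟩,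
    ⟨⟨f₂, fun hab => (hadj _ _).mpr (Or.inr (Or.inl ⟨_, _, rfl, rfl, hab⟩))⟩, f₂.injective⟩,
    Set.disjoint_iff_inter_eq_empty.mpr hdisj⟩
  obtain ⟨hab, hxy⟩ := deleteEdges_adj.mp hab
  refine (hadj _ _).mpr (Or.inl ⟨a, b, rfl, rfl, hab, ?_, ?_⟩) <;> rintro ⟨rfl, rfl⟩
  exacts [hxy rfl, hxy Sym2.eq_swap]

/-- If `G` is the Ore-composition of `G₁` and `G₂`, then `T(G) ≥ T(G₁) + T(G₂) - 2`;
furthermore, if `G₂ = K₅`, then `T(G) ≥ T(G₁) + 1`. -/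
theorem stmt_3 {V V₁ V₂ : Type} [Fintype V] [Fintype V₁] [Fintype V₂]
    (G : SimpleGraph V) (G₁ : SimpleGraph V₁) (G₂ : SimpleGraph V₂)
    (h : IsOreComposition G G₁ G₂) :
    (TT G : ℤ) ≥ (TT G₁ : ℤ) + (TT G₂ : ℤ) - 2 ∧
    (IsK5 G₂ → (TT G : ℤ) ≥ (TT G₁ : ℤ) + 1) := by
  obtain ⟨x, y, z, c₁, c₂, hc⟩ := h.exists_disjoint_copies
  have hT := TT_add_TT_le c₁ c₂ hc
  have h₁ := TT_le_TT_deleteEdges_add_one G₁ x y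
  refine ⟨?_, fun ⟨e⟩ => ?_⟩
  · have h₂ := TT_le_TT_induce_add_one G₂ z
    omega
  · classical
    have h₂ : 2 ≤ TT (G₂.induce {w | w ≠ z}) := by
      refine two_le_TT_of_isNClique (s := Finset.univ) ⟨?_, ?_⟩
      · exact fun a _ b _ hab => e.map_adj_iff.mp
          ((top_adj _ _).mpr (e.injective.ne (Subtype.coe_injective.ne hab)))
      · rw [Finset.card_univ, Set.card_ne_eq, Fintype.card_congr e.toEquiv, Fintype.card_fin]
    omega

end Postle
end

section
/- If H is a 5-Ore graph and v ∈ V(H), then there exists either an Ore-collapsible subset of H not containing v or an emerald of H not containing v. -/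
open SimpleGraph

namespace Postle

/-! Induct on the construction of `H`. In `K₅` the four vertices other than `v` form an emerald.
If `H` is an Ore-composition of `G₁` (edge `xy` deleted) and `G₂` (vertex `z` split), and `v` lies
on the `G₂` side, then the `G₁` side is Ore-collapsible: its boundary is `{x, y}`, and adding
`xy` back gives `G₁`. If `v` lies on the `G₁` side, apply induction to `G₂` at `z`: the
Ore-collapsible set or emerald it provides avoids `z`, so it reappears in `H` with the same
adjacencies, boundary and degrees. -/

open Function

section General

variable {V W : Type} {G : SimpleGraph V} {G' : SimpleGraph W}

theorem mem_boundary_iff {R : Set V} {v : V} :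
    v ∈ boundary G R ↔ v ∈ R ∧ ¬ G.neighborSet v ⊆ R := by
  simp only [boundary, Set.mem_ofPred_eq, Set.not_subset, SimpleGraph.mem_neighborSet]
  exact and_congr_right fun _ => exists_congr fun _ => and_comm

def addEdgeIso (e : G ≃g G') (u v : V) : addEdge G u v ≃g addEdge G' (e u) (e v) where
  toEquiv := e.toEquiv
  map_rel_iff' {a b} := by
    change (addEdge G' (e u) (e v)).Adj (e a) (e b) ↔ _
    simp only [addEdge, SimpleGraph.sup_adj, SimpleGraph.fromEdgeSet_adj, Set.mem_singleton_iff,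
      e.map_adj_iff, Sym2.eq_iff, ne_eq, e.injective.eq_iff]

noncomputable def induceImageIso (f : V → W) (hf : Injective f) (s : Set V)
    (hadj : ∀ a ∈ s, ∀ b ∈ s, G'.Adj (f a) (f b) ↔ G.Adj a b) :
    G.induce s ≃g G'.induce (f '' s) where
  toEquiv := Equiv.Set.image f s hf
  map_rel_iff' {a b} := hadj a a.2 b b.2

end General

theorem IsOreComposition.of_iso {V V' V₁ V₂ : Type} {G : SimpleGraph V} {G' : SimpleGraph V'}
    {G₁ : SimpleGraph V₁} {G₂ : SimpleGraph V₂} (h : IsOreComposition G G₁ G₂) (e : G ≃g G') :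
    IsOreComposition G' G₁ G₂ := by
  obtain ⟨x, y, z, f₁, f₂, S, hxy, hS, hSne, hNS, hdisj, hcover, hadj⟩ := h
  have hf₁ : ⇑(f₁.trans e.toEquiv.toEmbedding) = e ∘ f₁ := rfl
  have hf₂ : ⇑(f₂.trans e.toEquiv.toEmbedding) = e ∘ f₂ := rfl
  refine ⟨x, y, z, f₁.trans e.toEquiv.toEmbedding, f₂.trans e.toEquiv.toEmbedding, S, hxy, hS,
    hSne, hNS, ?_, ?_, fun a b => ?_⟩
  · rw [hf₁, hf₂, Set.range_comp, Set.range_comp, ← Set.image_inter e.injective, hdisj,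
      Set.image_empty]
  · rw [hf₁, hf₂, Set.range_comp, Set.range_comp, ← Set.image_union, hcover, Set.image_univ,
      RelIso.range_eq]
  · rw [← e.symm.map_adj_iff, hadj]
    simp only [RelIso.symm_apply_eq, RelIso.eq_symm_apply, Function.Embedding.trans_apply,
      RelIso.coe_toEmbedding]

theorem Is5Ore.of_iso {V V' : Type} {G : SimpleGraph V} {G' : SimpleGraph V'} (h : Is5Ore G)
    (e : G ≃g G') : Is5Ore G' := by
  induction h with
  | k5 h => exact .k5 ⟨e.symm.trans h.some⟩
  | ore h₁ h₂ h => exact .ore h₁ h₂ (h.of_iso e)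

theorem IsK5.isEmerald_compl_singleton {V : Type} {G : SimpleGraph V} (h : IsK5 G) (v : V) :
    IsEmerald G {v}ᶜ := by
  obtain ⟨e⟩ := h
  have : Finite V := .of_equiv _ e.toEquiv.symm
  have hadj (a b : V) : G.Adj a b ↔ a ≠ b := by
    rw [← e.map_adj_iff, SimpleGraph.top_adj, e.injective.ne_iff]
  have hcard (w : V) : ({w}ᶜ : Set V).ncard = 4 := by
    rw [Set.ncard_compl, Set.ncard_singleton, ← Nat.card_congr e.toEquiv.symm, Nat.card_fin]
  refine ⟨hcard v, fun a _ b _ hab => (hadj a b).2 hab, fun w _ => ?_⟩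
  have hnbr : G.neighborSet w = {w}ᶜ := by
    ext u
    simp [hadj, eq_comm]
  rw [degS, hnbr, hcard]

structure OreComposition {V V₁ V₂ : Type} (G : SimpleGraph V) (G₁ : SimpleGraph V₁)
    (G₂ : SimpleGraph V₂) where
  x : V₁
  y : V₁
  z : V₂
  f₁ : V₁ ↪ V
  f₂ : {w : V₂ // w ≠ z} ↪ V
  S : Set V₂
  adj_xy : G₁.Adj x y
  range_inter : Set.range f₁ ∩ Set.range f₂ = ∅
  range_union : Set.range f₁ ∪ Set.range f₂ = Set.univ
  exists_mem_S : ∃ w ∈ S, G₂.Adj z w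
  exists_notMem_S : ∃ w ∉ S, G₂.Adj z w
  adj_iff : ∀ a b : V, G.Adj a b ↔
      ((∃ a' b' : V₁, f₁ a' = a ∧ f₁ b' = b ∧ G₁.Adj a' b' ∧
          ¬(a' = x ∧ b' = y) ∧ ¬(a' = y ∧ b' = x)) ∨
       (∃ a' b' : {w : V₂ // w ≠ z}, f₂ a' = a ∧ f₂ b' = b ∧ G₂.Adj a'.1 b'.1) ∨
       (∃ w : {w : V₂ // w ≠ z}, G₂.Adj z w.1 ∧
         ((((a = f₁ x ∧ b = f₂ w) ∨ (b = f₁ x ∧ a = f₂ w)) ∧ w.1 ∈ S) ∨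
          (((a = f₁ y ∧ b = f₂ w) ∨ (b = f₁ y ∧ a = f₂ w)) ∧ w.1 ∉ S))))

theorem IsOreComposition.nonempty {V V₁ V₂ : Type} {G : SimpleGraph V} {G₁ : SimpleGraph V₁}
    {G₂ : SimpleGraph V₂} (h : IsOreComposition G G₁ G₂) : Nonempty (OreComposition G G₁ G₂) :=
  let ⟨x, y, z, f₁, f₂, S, hxy, hS, ⟨s, hs⟩, ⟨t, hzt, ht⟩, hinter, hunion, hadj⟩ := h
  ⟨⟨x, y, z, f₁, f₂, S, hxy, hinter, hunion, ⟨s, hs, hS s hs⟩, ⟨t, ht, hzt⟩, hadj⟩⟩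

namespace OreComposition

variable {V V₁ V₂ : Type} {G : SimpleGraph V} {G₁ : SimpleGraph V₁} {G₂ : SimpleGraph V₂}
  (D : OreComposition G G₁ G₂)

theorem f₁_ne_f₂ (a : V₁) (w : {w : V₂ // w ≠ D.z}) : D.f₁ a ≠ D.f₂ w := fun h =>
  Set.eq_empty_iff_forall_notMem.1 D.range_inter (D.f₁ a) ⟨⟨a, rfl⟩, ⟨w, h.symm⟩⟩

theorem f₁_or_f₂ (c : V) : (∃ a, D.f₁ a = c) ∨ ∃ w, D.f₂ w = c :=
  Set.eq_univ_iff_forall.1 D.range_union c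

theorem adj_f₁_f₁ (a b : V₁) :
    G.Adj (D.f₁ a) (D.f₁ b) ↔ G₁.Adj a b ∧ s(a, b) ≠ s(D.x, D.y) := by
  simp [D.adj_iff, D.f₁_ne_f₂, (D.f₁_ne_f₂ _ _).symm]

theorem adj_f₂_f₂ (w w' : {w : V₂ // w ≠ D.z}) : G.Adj (D.f₂ w) (D.f₂ w') ↔ G₂.Adj w w' := by
  simp [D.adj_iff, D.f₁_ne_f₂, (D.f₁_ne_f₂ _ _).symm]

open Classical in
/-- The end of the deleted edge `xy` that the split of `z` joins to the neighbor `w` of `z`. -/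
noncomputable def attach (w : V₂) : V₁ := if w ∈ D.S then D.x else D.y

theorem adj_f₁_f₂ (a : V₁) (w : {w : V₂ // w ≠ D.z}) :
    G.Adj (D.f₁ a) (D.f₂ w) ↔ G₂.Adj D.z w ∧ a = D.attach w := by
  have hattach : a = D.attach w ↔ (a = D.x ∧ w.1 ∈ D.S) ∨ (a = D.y ∧ w.1 ∉ D.S) := by
    unfold attach; split_ifs with h <;> simp [h]
  simp only [D.adj_iff, D.f₁_ne_f₂, (D.f₁_ne_f₂ _ _).symm, hattach]
  grind

open Classical in
/-- `f₂` extended by `z ↦ f₁ a`. Taking `a = attach w` makes it carry the neighborhood of `w`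
onto that of `f₂ w`. -/
noncomputable def lift (a : V₁) (w : V₂) : V :=
  if h : w = D.z then D.f₁ a else D.f₂ ⟨w, h⟩

theorem lift_self (a : V₁) : D.lift a D.z = D.f₁ a := dif_pos rfl

theorem lift_of_ne (a : V₁) {w : V₂} (hw : w ≠ D.z) : D.lift a w = D.f₂ ⟨w, hw⟩ := dif_neg hw

theorem lift_eq_lift_iff {a b : V₁} {u w : V₂} :
    D.lift a u = D.lift b w ↔ u = w ∧ (w = D.z → a = b) := by
  by_cases hu : u = D.z <;> by_cases hw : w = D.z <;>
    simp [lift, hu, hw, @eq_comm _ D.z, D.f₁_ne_f₂, (D.f₁_ne_f₂ _ _).symm]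

theorem lift_injective (a : V₁) : Injective (D.lift a) := fun _ _ h =>
  (D.lift_eq_lift_iff.1 h).1

theorem lift_mem_lift_image_iff {A : Set V₂} {a b : V₁} {w : V₂} :
    D.lift b w ∈ D.lift a '' A ↔ w ∈ A ∧ (w = D.z → a = b) := by
  refine ⟨fun ⟨u, hu, h⟩ => ?_, fun ⟨hw, h⟩ => ⟨w, hw, D.lift_eq_lift_iff.2 ⟨rfl, h⟩⟩⟩
  obtain ⟨rfl, h⟩ := D.lift_eq_lift_iff.1 h
  exact ⟨hu, h⟩

theorem f₁_notMem_lift_image {A : Set V₂} (hz : D.z ∉ A) (a b : V₁) :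
    D.f₁ b ∉ D.lift a '' A := by
  rw [← D.lift_self b, D.lift_mem_lift_image_iff]
  exact fun h => hz h.1

theorem lift_preimage_lift_image {A : Set V₂} (hz : D.z ∉ A) (a b : V₁) :
    D.lift b ⁻¹' (D.lift a '' A) = A := by
  ext w
  rw [Set.mem_preimage, D.lift_mem_lift_image_iff, and_iff_left_iff_imp]
  exact fun hw h => absurd (h ▸ hw) hz

theorem adj_lift_lift (a b : V₁) {w w' : V₂} (hw : w ≠ D.z) (hw' : w' ≠ D.z) :
    G.Adj (D.lift a w) (D.lift b w') ↔ G₂.Adj w w' := by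
  rw [D.lift_of_ne a hw, D.lift_of_ne b hw', D.adj_f₂_f₂]

theorem neighborSet_lift (a : V₁) {w : V₂} (hw : w ≠ D.z) :
    G.neighborSet (D.lift a w) = D.lift (D.attach w) '' G₂.neighborSet w := by
  ext c
  rw [SimpleGraph.mem_neighborSet]
  rcases D.f₁_or_f₂ c with ⟨b, rfl⟩ | ⟨u, rfl⟩
  · rw [← D.lift_self b, D.lift_mem_lift_image_iff, SimpleGraph.adj_comm, D.lift_self,
      D.lift_of_ne a hw, D.adj_f₁_f₂, SimpleGraph.mem_neighborSet, SimpleGraph.adj_comm]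
    simp [eq_comm]
  · rw [← D.lift_of_ne a u.2, D.adj_lift_lift a a hw u.2, D.lift_mem_lift_image_iff]
    exact ⟨fun h => ⟨h, fun hu => absurd hu u.2⟩, And.left⟩

theorem degS_lift (a : V₁) {w : V₂} (hw : w ≠ D.z) : degS G (D.lift a w) = degS G₂ w := by
  rw [degS, D.neighborSet_lift a hw, Set.ncard_image_of_injective _ (D.lift_injective _), degS]

theorem boundary_lift_image (a : V₁) {A : Set V₂} (hz : D.z ∉ A) :
    boundary G (D.lift a '' A) = D.lift a '' boundary G₂ A := by
  have hlift : ∀ w ∈ A, D.lift a w ∈ boundary G (D.lift a '' A) ↔ w ∈ boundary G₂ A := by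
    intro w hw
    rw [mem_boundary_iff, mem_boundary_iff, D.neighborSet_lift a (ne_of_mem_of_not_mem hw hz),
      Set.image_subset_iff, D.lift_preimage_lift_image hz]
    simp only [Set.mem_image_of_mem _ hw, hw, true_and]
  ext c
  constructor
  · intro hc
    obtain ⟨w, hw, rfl⟩ := hc.1
    exact Set.mem_image_of_mem _ ((hlift w hw).1 hc)
  · rintro ⟨w, hw, rfl⟩
    exact (hlift w hw.1).2 hw

theorem isEmerald_lift_image (a : V₁) {S : Set V₂} (hS : IsEmerald G₂ S) (hz : D.z ∉ S) :
    IsEmerald G (D.lift a '' S) := by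
  obtain ⟨hcard, hclique, hdeg⟩ := hS
  refine ⟨by rw [Set.ncard_image_of_injective _ (D.lift_injective a), hcard], ?_, ?_⟩
  · rintro _ ⟨u, hu, rfl⟩ _ ⟨w, hw, rfl⟩ hne
    exact (D.adj_lift_lift a a (ne_of_mem_of_not_mem hu hz) (ne_of_mem_of_not_mem hw hz)).2
      (hclique u hu w hw (ne_of_apply_ne _ hne))
  · rintro _ ⟨w, hw, rfl⟩
    rw [D.degS_lift a (ne_of_mem_of_not_mem hw hz)]
    exact hdeg w hw

theorem oreCollapsible_lift_image (a : V₁) {R : Set V₂} (hR : OreCollapsible G₂ R)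
    (hz : D.z ∉ R) : OreCollapsible G (D.lift a '' R) := by
  obtain ⟨-, u, v, huv, hnadj, hbd, h5⟩ := hR
  let e := induceImageIso (D.lift a) (D.lift_injective a) R fun u hu w hw =>
    D.adj_lift_lift a a (ne_of_mem_of_not_mem hu hz) (ne_of_mem_of_not_mem hw hz)
  refine ⟨fun h => D.f₁_notMem_lift_image hz a a (h ▸ Set.mem_univ _), e u, e v,
    (D.lift_injective a).ne huv, fun h => hnadj (e.map_adj_iff.1 h), ?_,
    h5.of_iso (addEdgeIso e u v)⟩
  rw [D.boundary_lift_image a hz, hbd, Set.image_pair]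
  rfl

theorem attach_eq_x_or_y (w : V₂) : D.attach w = D.x ∨ D.attach w = D.y := by
  unfold attach
  split_ifs <;> simp

theorem boundary_range_f₁ : boundary G (Set.range D.f₁) = {D.f₁ D.x, D.f₁ D.y} := by
  ext c
  constructor
  · rintro ⟨⟨a, rfl⟩, d, hd, hadj⟩
    obtain ⟨w, rfl⟩ := (D.f₁_or_f₂ d).resolve_left hd
    rw [((D.adj_f₁_f₂ a w).1 hadj).2]
    rcases D.attach_eq_x_or_y w with h | h <;> simp [h]
  · have hbd (a : V₁) (w : V₂) (hzw : G₂.Adj D.z w) (ha : D.attach w = a) :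
        D.f₁ a ∈ boundary G (Set.range D.f₁) :=
      ⟨⟨a, rfl⟩, D.f₂ ⟨w, hzw.ne'⟩, fun ⟨b, hb⟩ => D.f₁_ne_f₂ b _ hb,
        (D.adj_f₁_f₂ a _).2 ⟨hzw, ha.symm⟩⟩
    rintro (rfl | rfl)
    · obtain ⟨s, hs, hzs⟩ := D.exists_mem_S
      exact hbd _ s hzs (if_pos hs)
    · obtain ⟨t, ht, hzt⟩ := D.exists_notMem_S
      exact hbd _ t hzt (if_neg ht)

noncomputable def addEdgeInduceRangeIso :
    G₁ ≃g addEdge (G.induce (Set.range D.f₁)) ⟨D.f₁ D.x, D.x, rfl⟩ ⟨D.f₁ D.y, D.y, rfl⟩ where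
  toEquiv := Equiv.ofInjective _ D.f₁.injective
  map_rel_iff' {a b} := by
    simp only [addEdge, SimpleGraph.sup_adj, SimpleGraph.fromEdgeSet_adj, SimpleGraph.comap_adj,
      Set.mem_singleton_iff, Equiv.ofInjective_apply, Function.Embedding.coe_subtype, D.adj_f₁_f₁,
      Sym2.eq_iff, Subtype.ext_iff, EmbeddingLike.apply_eq_iff_eq, ne_eq]
    constructor
    · rintro (⟨h, -⟩ | ⟨⟨rfl, rfl⟩ | ⟨rfl, rfl⟩, -⟩)
      exacts [h, D.adj_xy, D.adj_xy.symm]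
    · intro h
      by_cases hxy : a = D.x ∧ b = D.y ∨ a = D.y ∧ b = D.x
      exacts [.inr ⟨hxy, h.ne⟩, .inl ⟨h, hxy⟩]

theorem oreCollapsible_range_f₁ (h₁ : Is5Ore G₁) : OreCollapsible G (Set.range D.f₁) := by
  obtain ⟨s, -, hzs⟩ := D.exists_mem_S
  have hs : D.f₂ ⟨s, hzs.ne'⟩ ∉ Set.range D.f₁ := fun ⟨a, ha⟩ => D.f₁_ne_f₂ a _ ha
  exact ⟨fun h => hs (h ▸ Set.mem_univ _), _, _, D.f₁.injective.ne D.adj_xy.ne,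
    fun h => ((D.adj_f₁_f₁ _ _).1 h).2 rfl, D.boundary_range_f₁,
    h₁.of_iso D.addEdgeInduceRangeIso⟩

end OreComposition

theorem stmt_4_general {V : Type} (H : SimpleGraph V) (h5 : Is5Ore H) (v : V) :
    (∃ R : Set V, OreCollapsible H R ∧ v ∉ R) ∨
    (∃ S : Set V, IsEmerald H S ∧ v ∉ S) := by
  induction h5 with
  | k5 h => exact .inr ⟨{v}ᶜ, h.isEmerald_compl_singleton v, fun hv => hv rfl⟩
  | ore h₁ _ h _ ih₂ =>
    obtain ⟨D⟩ := h.nonempty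
    rcases D.f₁_or_f₂ v with ⟨a, rfl⟩ | ⟨w, rfl⟩
    · rcases ih₂ D.z with ⟨R, hR, hz⟩ | ⟨S, hS, hz⟩
      · exact .inl ⟨_, D.oreCollapsible_lift_image a hR hz, D.f₁_notMem_lift_image hz a a⟩
      · exact .inr ⟨_, D.isEmerald_lift_image a hS hz, D.f₁_notMem_lift_image hz a a⟩
    · exact .inl ⟨_, D.oreCollapsible_range_f₁ h₁, fun ⟨a, ha⟩ => D.f₁_ne_f₂ a w ha⟩

/-- If `H` is 5-Ore and `v ∈ V(H)`, then there exists either an Ore-collapsible subset of `H`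
not containing `v` or an emerald of `H` not containing `v`. -/
theorem stmt_4 {V : Type} [Fintype V] (H : SimpleGraph V) (h5 : Is5Ore H) (v : V) :
    (∃ R : Set V, OreCollapsible H R ∧ v ∉ R) ∨
    (∃ S : Set V, IsEmerald H S ∧ v ∉ S) :=
  stmt_4_general H h5 v

end Postle
end

section
/- If R is an Ore-collapsible subset of a graph G, then there exists a diamond or an emerald of G whose vertices lie in R. -/
open SimpleGraph

namespace Postle

/-! ### Auxiliary machinery for stmt_6 -/

/-- A diamond with a specified special pair. -/
def DiamondAt {V : Type} (G : SimpleGraph V) (D : Set V) (p q : V) : Prop :=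
  D.ncard = 5 ∧ p ∈ D ∧ q ∈ D ∧ p ≠ q ∧
    (∀ a ∈ D, ∀ b ∈ D, a ≠ b → ¬(a = p ∧ b = q) → ¬(a = q ∧ b = p) → G.Adj a b) ∧
    ∀ w ∈ D, w ≠ p → w ≠ q → degS G w = 4

lemma DiamondAt.isDiamond {V : Type} {G : SimpleGraph V} {D : Set V} {p q : V}
    (h : DiamondAt G D p q) : IsDiamond G D :=
  ⟨h.1, p, h.2.1, q, h.2.2.1, h.2.2.2.1, h.2.2.2.2.1, h.2.2.2.2.2⟩

/-- A gem (diamond or emerald) suitable w.r.t. the pair `u, v`. -/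
def GoodFor {V : Type} (G : SimpleGraph V) (u v : V) : Prop :=
  (∃ D, IsEmerald G D ∧ u ∉ D ∧ v ∉ D) ∨
  (∃ D p q, DiamondAt G D p q ∧ (u ∈ D → u = p ∨ u = q) ∧ (v ∈ D → v = p ∨ v = q))

/-- A gem avoiding the vertex `t`. -/
def AvoidGem {V : Type} (G : SimpleGraph V) (t : V) : Prop :=
  (∃ D, IsEmerald G D ∧ t ∉ D) ∨ (∃ D p q, DiamondAt G D p q ∧ t ∉ D)

lemma key5ore : ∀ {V : Type} {G : SimpleGraph V}, Is5Ore G →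
    (∀ u v : V, G.Adj u v → GoodFor G u v) ∧ (∀ t : V, AvoidGem G t) := by
  intro V G h
  induction h with
  | @k5 V G h =>
    obtain ⟨e⟩ := h
    have hdegall : ∀ w : V, degS G w = 4 := by
      intro w
      have h1 : degS G w = ((⊤ : SimpleGraph (Fin 5)).neighborSet (e w)).ncard := by
        unfold degS
        rw [← Nat.card_coe_set_eq, ← Nat.card_coe_set_eq]
        exact Nat.card_congr (e.mapNeighborSet w)
      have h2 : (⊤ : SimpleGraph (Fin 5)).neighborSet (e w) = {e w}ᶜ := by
        ext u'
        simp [SimpleGraph.mem_neighborSet, ne_comm]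
      rw [h1, h2, Set.ncard_eq_toFinset_card']
      simp [Finset.card_compl]
    have hadjall : ∀ a b : V, a ≠ b → G.Adj a b := by
      intro a b hab
      have : (⊤ : SimpleGraph (Fin 5)).Adj (e a) (e b) := by
        simp only [SimpleGraph.top_adj]
        exact fun hh => hab (e.toEquiv.injective hh)
      exact e.map_adj_iff.mp this
    have hcard : Nat.card V = 5 := by
      rw [Nat.card_congr e.toEquiv]; simp
    constructor
    · intro u v huv
      right
      refine ⟨Set.univ, u, v, ⟨?_, trivial, trivial, huv.ne, ?_, ?_⟩,
        fun _ => Or.inl rfl, fun _ => Or.inr rfl⟩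
      · rw [Set.ncard_univ]; exact hcard
      · exact fun a _ b _ hab _ _ => hadjall a b hab
      · exact fun w _ _ _ => hdegall w
    · intro t
      left
      refine ⟨{t}ᶜ, ⟨?_, ?_, ?_⟩, by simp⟩
      · have h5 : ({e t}ᶜ : Set (Fin 5)).ncard = 4 := by
          rw [Set.ncard_eq_toFinset_card']; simp [Finset.card_compl]
        have himg : ⇑e.toEquiv '' ({t}ᶜ : Set V) = {e.toEquiv t}ᶜ := by
          rw [Set.image_compl_eq e.toEquiv.bijective, Set.image_singleton]
        calc ({t}ᶜ : Set V).ncard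
            = (⇑e.toEquiv '' ({t}ᶜ : Set V)).ncard :=
              (Set.ncard_image_of_injective _ e.toEquiv.injective).symm
          _ = 4 := by rw [himg]; exact h5
      · exact fun a _ b _ hab => hadjall a b hab
      · exact fun w _ => hdegall w
  | @ore V V₁ V₂ G G₁ G₂ h₁ h₂ hcomp ih₁ ih₂ =>
    obtain ⟨x, y, z, f₁, f₂, S, hxy, hSN, hSne, hSne', hdis, huniv, hadj⟩ := hcomp
    classical
    have hxyne : x ≠ y := hxy.ne
    have hdisj : ∀ (a : V₁) (b : {w : V₂ // w ≠ z}), f₁ a ≠ f₂ b := by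
      intro a b hab
      have : f₁ a ∈ Set.range ⇑f₁ ∩ Set.range ⇑f₂ := ⟨⟨a, rfl⟩, ⟨b, hab.symm⟩⟩
      rw [hdis] at this
      exact this
    -- adjacency inside the f₂ part
    have h₂adj : ∀ a b : {w : V₂ // w ≠ z}, G.Adj (f₂ a) (f₂ b) ↔ G₂.Adj a.1 b.1 := by
      intro a b
      constructor
      · intro hab
        rcases (hadj _ _).mp hab with ⟨a', b', ha, hb, hg, _, _⟩ | ⟨a', b', ha, hb, hg⟩ |
          ⟨w, hw, ⟨⟨h1, _⟩ | ⟨h1, _⟩, _⟩ | ⟨⟨h1, _⟩ | ⟨h1, _⟩, _⟩⟩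
        · exact absurd ha (hdisj a' a)
        · have ha' : a' = a := f₂.injective ha
          have hb' : b' = b := f₂.injective hb
          rw [ha', hb'] at hg; exact hg
        · exact absurd h1.symm (hdisj x a)
        · exact absurd h1.symm (hdisj x b)
        · exact absurd h1.symm (hdisj y a)
        · exact absurd h1.symm (hdisj y b)
      · intro hab
        exact (hadj _ _).mpr (Or.inr (Or.inl ⟨a, b, rfl, rfl, hab⟩))
    -- adjacency inside the f₁ part
    have h₁adj : ∀ a b : V₁, ¬(a = x ∧ b = y) → ¬(a = y ∧ b = x) →
        (G.Adj (f₁ a) (f₁ b) ↔ G₁.Adj a b) := by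
      intro a b hn1 hn2
      constructor
      · intro hab
        rcases (hadj _ _).mp hab with ⟨a', b', ha, hb, hg, _, _⟩ | ⟨a', b', ha, hb, hg⟩ |
          ⟨w, hw, ⟨⟨_, h1⟩ | ⟨_, h1⟩, _⟩ | ⟨⟨_, h1⟩ | ⟨_, h1⟩, _⟩⟩
        · have ha' : a' = a := f₁.injective ha
          have hb' : b' = b := f₁.injective hb
          rw [ha', hb'] at hg; exact hg
        · exact absurd ha.symm (hdisj a a')
        · exact absurd h1 (hdisj b w)
        · exact absurd h1 (hdisj a w)
        · exact absurd h1 (hdisj b w)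
        · exact absurd h1 (hdisj a w)
      · intro hab
        exact (hadj _ _).mpr (Or.inl ⟨a, b, rfl, rfl, hab, hn1, hn2⟩)
    -- split edges
    have hfx : ∀ w : {w : V₂ // w ≠ z}, G.Adj (f₁ x) (f₂ w) ↔ (G₂.Adj z w.1 ∧ w.1 ∈ S) := by
      intro w
      constructor
      · intro hab
        rcases (hadj _ _).mp hab with ⟨a', b', ha, hb, _, _, _⟩ | ⟨a', b', ha, hb, _⟩ |
          ⟨w', hw', ⟨⟨h1, h2⟩ | ⟨h1, h2⟩, h3⟩ | ⟨⟨h1, h2⟩ | ⟨h1, h2⟩, h3⟩⟩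
        · exact absurd hb (hdisj b' w)
        · exact absurd ha.symm (hdisj x a')
        · have : w' = w := f₂.injective h2.symm
          rw [this] at hw' h3; exact ⟨hw', h3⟩
        · exact absurd h2 (hdisj x w')
        · exact absurd (f₁.injective h1) hxyne
        · exact absurd h2 (hdisj x w')
      · intro ⟨hz, hS⟩
        exact (hadj _ _).mpr (Or.inr (Or.inr ⟨w, hz, Or.inl ⟨Or.inl ⟨rfl, rfl⟩, hS⟩⟩))
    have hfy : ∀ w : {w : V₂ // w ≠ z}, G.Adj (f₁ y) (f₂ w) ↔ (G₂.Adj z w.1 ∧ w.1 ∉ S) := by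
      intro w
      constructor
      · intro hab
        rcases (hadj _ _).mp hab with ⟨a', b', ha, hb, _, _, _⟩ | ⟨a', b', ha, hb, _⟩ |
          ⟨w', hw', ⟨⟨h1, h2⟩ | ⟨h1, h2⟩, h3⟩ | ⟨⟨h1, h2⟩ | ⟨h1, h2⟩, h3⟩⟩
        · exact absurd hb (hdisj b' w)
        · exact absurd ha.symm (hdisj y a')
        · exact absurd (f₁.injective h1).symm hxyne
        · exact absurd h2 (hdisj y w')
        · have : w' = w := f₂.injective h2.symm
          rw [this] at hw' h3; exact ⟨hw', h3⟩
        · exact absurd h2 (hdisj y w')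
      · intro ⟨hz, hS⟩
        exact (hadj _ _).mpr (Or.inr (Or.inr ⟨w, hz, Or.inr ⟨Or.inl ⟨rfl, rfl⟩, hS⟩⟩))
    -- degree preservation on the f₂ side
    have hdeg₂ : ∀ w : {w : V₂ // w ≠ z}, degS G (f₂ w) = degS G₂ w.1 := by
      intro w
      set g : V₂ → V := fun n => if h : n = z then (if w.1 ∈ S then f₁ x else f₁ y)
        else f₂ ⟨n, h⟩ with hg
      have hginj : Function.Injective g := by
        intro n₁ n₂ hn
        by_cases h1 : n₁ = z <;> by_cases h2 : n₂ = z
        · rw [h1, h2]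
        · rw [hg] at hn; simp only [dif_pos h1, dif_neg h2] at hn
          by_cases hS' : w.1 ∈ S
          · rw [if_pos hS'] at hn; exact absurd hn (hdisj x ⟨n₂, h2⟩)
          · rw [if_neg hS'] at hn; exact absurd hn (hdisj y ⟨n₂, h2⟩)
        · rw [hg] at hn; simp only [dif_neg h1, dif_pos h2] at hn
          by_cases hS' : w.1 ∈ S
          · rw [if_pos hS'] at hn; exact absurd hn.symm (hdisj x ⟨n₁, h1⟩)
          · rw [if_neg hS'] at hn; exact absurd hn.symm (hdisj y ⟨n₁, h1⟩)
        · rw [hg] at hn; simp only [dif_neg h1, dif_neg h2] at hn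
          have := f₂.injective hn
          exact congrArg Subtype.val this
      have himg : G.neighborSet (f₂ w) = g '' (G₂.neighborSet w.1) := by
        ext b
        constructor
        · intro hb
          have hb' : G.Adj (f₂ w) b := hb
          rcases (hadj _ _).mp hb' with ⟨a', b', ha, hbb, hg', _, _⟩ | ⟨a', b', ha, hbb, hg'⟩ |
            ⟨w', hw', ⟨⟨h1, h2⟩ | ⟨h1, h2⟩, h3⟩ | ⟨⟨h1, h2⟩ | ⟨h1, h2⟩, h3⟩⟩
          · exact absurd ha (hdisj a' w)
          · have ha' : a' = w := f₂.injective ha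
            rw [ha'] at hg'
            refine ⟨b'.1, hg', ?_⟩
            rw [hg]; simp only [dif_neg b'.2]
            rw [← hbb]
          · exact absurd h1.symm (hdisj x w)
          · have hww : w' = w := f₂.injective h2.symm
            rw [hww] at hw' h3
            refine ⟨z, hw'.symm, ?_⟩
            rw [hg]; simp only [dif_pos rfl, if_pos h3]
            exact h1.symm
          · exact absurd h1.symm (hdisj y w)
          · have hww : w' = w := f₂.injective h2.symm
            rw [hww] at hw' h3
            refine ⟨z, hw'.symm, ?_⟩
            rw [hg]; simp only [dif_pos rfl, if_neg h3]
            exact h1.symm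
        · rintro ⟨n, hn, rfl⟩
          have hn' : G₂.Adj w.1 n := hn
          by_cases hz' : n = z
          · subst hz'
            rw [hg]
            simp only [dif_pos rfl]
            by_cases hS' : w.1 ∈ S
            · rw [if_pos hS']
              exact ((hfx w).mpr ⟨hn'.symm, hS'⟩).symm
            · rw [if_neg hS']
              exact ((hfy w).mpr ⟨hn'.symm, hS'⟩).symm
          · show G.Adj (f₂ w) (g n)
            rw [hg]
            simp only [dif_neg hz']
            exact (h₂adj w ⟨n, hz'⟩).mpr hn'
      unfold degS
      rw [himg, Set.ncard_image_of_injective _ hginj]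
    -- degree preservation on the f₁ side
    have hdeg₁ : ∀ a : V₁, a ≠ x → a ≠ y → degS G (f₁ a) = degS G₁ a := by
      intro a hax hay
      have himg : G.neighborSet (f₁ a) = ⇑f₁ '' (G₁.neighborSet a) := by
        ext b
        constructor
        · intro hb
          have hb' : G.Adj (f₁ a) b := hb
          rcases (hadj _ _).mp hb' with ⟨a', b', ha, hbb, hg', _, _⟩ | ⟨a', b', ha, hbb, hg'⟩ |
            ⟨w', hw', ⟨⟨h1, h2⟩ | ⟨h1, h2⟩, h3⟩ | ⟨⟨h1, h2⟩ | ⟨h1, h2⟩, h3⟩⟩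
          · have ha' : a' = a := f₁.injective ha
            rw [ha'] at hg'
            exact ⟨b', hg', hbb⟩
          · exact absurd ha.symm (hdisj a a')
          · exact absurd (f₁.injective h1) hax
          · exact absurd h2 (hdisj a w')
          · exact absurd (f₁.injective h1) hay
          · exact absurd h2 (hdisj a w')
        · rintro ⟨n, hn, rfl⟩
          have h1 : ¬(a = x ∧ n = y) := fun hh => hax hh.1
          have h2 : ¬(a = y ∧ n = x) := fun hh => hay hh.1
          exact (h₁adj a n h1 h2).mpr hn
      unfold degS
      rw [himg, Set.ncard_image_of_injective _ f₁.injective]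
    -- not-in-range helpers
    have hnotin₂ : ∀ (c : V₁) (D' : Set V), D' ⊆ Set.range ⇑f₂ → f₁ c ∉ D' := by
      intro c D' hsub hc
      rcases hsub hc with ⟨b, hb⟩
      exact hdisj c b hb.symm
    have hnotin₁ : ∀ (c : {w : V₂ // w ≠ z}) (D' : Set V), D' ⊆ Set.range ⇑f₁ → f₂ c ∉ D' := by
      intro c D' hsub hc
      rcases hsub hc with ⟨b, hb⟩
      exact hdisj b c hb
    -- transfer of a z-avoiding gem of G₂
    have hzgem : ∃ D' : Set V, D' ⊆ Set.range ⇑f₂ ∧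
        (IsEmerald G D' ∨ ∃ p' q', DiamondAt G D' p' q') := by
      have hval : Function.Injective (Subtype.val : {w : V₂ // w ≠ z} → V₂) :=
        Subtype.val_injective
      rcases ih₂.2 z with ⟨D, hD, hz⟩ | ⟨D, p, q, hD, hz⟩
      · -- emerald
        have hDsub : D ⊆ Set.range (Subtype.val : {w : V₂ // w ≠ z} → V₂) := by
          intro d hd
          exact ⟨⟨d, fun hh => hz (hh ▸ hd)⟩, rfl⟩
        refine ⟨⇑f₂ '' (Subtype.val ⁻¹' D), Set.image_subset_range _ _, Or.inl ⟨?_, ?_, ?_⟩⟩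
        · rw [Set.ncard_image_of_injective _ f₂.injective,
            ← Set.ncard_image_of_injective _ hval,
            Set.image_preimage_eq_of_subset hDsub]
          exact hD.1
        · rintro a ⟨a₀, ha₀, rfl⟩ b ⟨b₀, hb₀, rfl⟩ hab
          have hne : a₀.1 ≠ b₀.1 := fun hh => hab (congrArg ⇑f₂ (Subtype.ext hh))
          exact (h₂adj a₀ b₀).mpr (hD.2.1 a₀.1 ha₀ b₀.1 hb₀ hne)
        · rintro w ⟨w₀, hw₀, rfl⟩
          rw [hdeg₂ w₀]
          exact hD.2.2 w₀.1 hw₀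
      · -- diamond
        have hp : p ≠ z := fun hh => hz (hh ▸ hD.2.1)
        have hq : q ≠ z := fun hh => hz (hh ▸ hD.2.2.1)
        have hDsub : D ⊆ Set.range (Subtype.val : {w : V₂ // w ≠ z} → V₂) := by
          intro d hd
          exact ⟨⟨d, fun hh => hz (hh ▸ hd)⟩, rfl⟩
        refine ⟨⇑f₂ '' (Subtype.val ⁻¹' D), Set.image_subset_range _ _,
          Or.inr ⟨f₂ ⟨p, hp⟩, f₂ ⟨q, hq⟩, ?_, ⟨⟨p, hp⟩, hD.2.1, rfl⟩, ⟨⟨q, hq⟩, hD.2.2.1, rfl⟩,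
            ?_, ?_, ?_⟩⟩
        · rw [Set.ncard_image_of_injective _ f₂.injective,
            ← Set.ncard_image_of_injective _ hval,
            Set.image_preimage_eq_of_subset hDsub]
          exact hD.1
        · intro hh
          exact hD.2.2.2.1 (congrArg Subtype.val (f₂.injective hh))
        · rintro a ⟨a₀, ha₀, rfl⟩ b ⟨b₀, hb₀, rfl⟩ hab hn1 hn2
          have hne : a₀.1 ≠ b₀.1 := fun hh => hab (congrArg ⇑f₂ (Subtype.ext hh))
          have hn1' : ¬(a₀.1 = p ∧ b₀.1 = q) := by
            rintro ⟨hh1, hh2⟩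
            exact hn1 ⟨congrArg ⇑f₂ (Subtype.ext hh1), congrArg ⇑f₂ (Subtype.ext hh2)⟩
          have hn2' : ¬(a₀.1 = q ∧ b₀.1 = p) := by
            rintro ⟨hh1, hh2⟩
            exact hn2 ⟨congrArg ⇑f₂ (Subtype.ext hh1), congrArg ⇑f₂ (Subtype.ext hh2)⟩
          exact (h₂adj a₀ b₀).mpr (hD.2.2.2.2.1 a₀.1 ha₀ b₀.1 hb₀ hne hn1' hn2')
        · rintro w ⟨w₀, hw₀, rfl⟩ hwp hwq
          rw [hdeg₂ w₀]
          refine hD.2.2.2.2.2 w₀.1 hw₀ ?_ ?_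
          · intro hh; exact hwp (congrArg ⇑f₂ (Subtype.ext hh))
          · intro hh; exact hwq (congrArg ⇑f₂ (Subtype.ext hh))
    -- transfer of a good-for-(x,y) gem of G₁
    have hxygem : ∃ D' : Set V, D' ⊆ Set.range ⇑f₁ ∧
        ((IsEmerald G D' ∧ f₁ x ∉ D' ∧ f₁ y ∉ D') ∨
         (∃ p' q', DiamondAt G D' p' q' ∧ (f₁ x ∈ D' → f₁ x = p' ∨ f₁ x = q') ∧
           (f₁ y ∈ D' → f₁ y = p' ∨ f₁ y = q'))) := by
      rcases ih₁.1 x y hxy with ⟨D, hD, hxD, hyD⟩ | ⟨D, p, q, hD, hxD, hyD⟩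
      · refine ⟨⇑f₁ '' D, Set.image_subset_range _ _, Or.inl ⟨⟨?_, ?_, ?_⟩, ?_, ?_⟩⟩
        · rw [Set.ncard_image_of_injective _ f₁.injective]; exact hD.1
        · rintro a ⟨a₀, ha₀, rfl⟩ b ⟨b₀, hb₀, rfl⟩ hab
          have hne : a₀ ≠ b₀ := fun hh => hab (congrArg ⇑f₁ hh)
          have h1 : ¬(a₀ = x ∧ b₀ = y) := fun hh => hxD (hh.1 ▸ ha₀)
          have h2 : ¬(a₀ = y ∧ b₀ = x) := fun hh => hyD (hh.1 ▸ ha₀)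
          exact (h₁adj a₀ b₀ h1 h2).mpr (hD.2.1 a₀ ha₀ b₀ hb₀ hne)
        · rintro w ⟨w₀, hw₀, rfl⟩
          have h1 : w₀ ≠ x := fun hh => hxD (hh ▸ hw₀)
          have h2 : w₀ ≠ y := fun hh => hyD (hh ▸ hw₀)
          rw [hdeg₁ w₀ h1 h2]
          exact hD.2.2 w₀ hw₀
        · rintro ⟨a₀, ha₀, hh⟩
          exact hxD ((f₁.injective hh).symm ▸ ha₀)
        · rintro ⟨a₀, ha₀, hh⟩
          exact hyD ((f₁.injective hh).symm ▸ ha₀)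
      · refine ⟨⇑f₁ '' D, Set.image_subset_range _ _,
          Or.inr ⟨f₁ p, f₁ q, ⟨?_, ⟨p, hD.2.1, rfl⟩, ⟨q, hD.2.2.1, rfl⟩, ?_, ?_, ?_⟩, ?_, ?_⟩⟩
        · rw [Set.ncard_image_of_injective _ f₁.injective]; exact hD.1
        · intro hh; exact hD.2.2.2.1 (f₁.injective hh)
        · rintro a ⟨a₀, ha₀, rfl⟩ b ⟨b₀, hb₀, rfl⟩ hab hn1 hn2
          have hne : a₀ ≠ b₀ := fun hh => hab (congrArg ⇑f₁ hh)
          have hn1' : ¬(a₀ = p ∧ b₀ = q) := by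
            rintro ⟨hh1, hh2⟩; exact hn1 ⟨congrArg ⇑f₁ hh1, congrArg ⇑f₁ hh2⟩
          have hn2' : ¬(a₀ = q ∧ b₀ = p) := by
            rintro ⟨hh1, hh2⟩; exact hn2 ⟨congrArg ⇑f₁ hh1, congrArg ⇑f₁ hh2⟩
          have hg := hD.2.2.2.2.1 a₀ ha₀ b₀ hb₀ hne hn1' hn2'
          have h1 : ¬(a₀ = x ∧ b₀ = y) := by
            rintro ⟨rfl, rfl⟩
            rcases hxD ha₀ with rfl | rfl
            · rcases hyD hb₀ with rfl | rfl
              · exact hne rfl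
              · exact hn1' ⟨rfl, rfl⟩
            · rcases hyD hb₀ with rfl | rfl
              · exact hn2' ⟨rfl, rfl⟩
              · exact hne rfl
          have h2 : ¬(a₀ = y ∧ b₀ = x) := by
            rintro ⟨rfl, rfl⟩
            rcases hxD hb₀ with rfl | rfl
            · rcases hyD ha₀ with rfl | rfl
              · exact hne rfl
              · exact hn2' ⟨rfl, rfl⟩
            · rcases hyD ha₀ with rfl | rfl
              · exact hn1' ⟨rfl, rfl⟩
              · exact hne rfl
          exact (h₁adj a₀ b₀ h1 h2).mpr hg
        · rintro w ⟨w₀, hw₀, rfl⟩ hwp hwq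
          have hwp' : w₀ ≠ p := fun hh => hwp (congrArg ⇑f₁ hh)
          have hwq' : w₀ ≠ q := fun hh => hwq (congrArg ⇑f₁ hh)
          have h1 : w₀ ≠ x := by
            rintro rfl
            rcases hxD hw₀ with rfl | rfl
            · exact hwp' rfl
            · exact hwq' rfl
          have h2 : w₀ ≠ y := by
            rintro rfl
            rcases hyD hw₀ with rfl | rfl
            · exact hwp' rfl
            · exact hwq' rfl
          rw [hdeg₁ w₀ h1 h2]
          exact hD.2.2.2.2.2 w₀ hw₀ hwp' hwq'
        · rintro ⟨a₀, ha₀, hh⟩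
          rcases hxD ((f₁.injective hh).symm ▸ ha₀) with rfl | rfl
          · exact Or.inl rfl
          · exact Or.inr rfl
        · rintro ⟨a₀, ha₀, hh⟩
          rcases hyD ((f₁.injective hh).symm ▸ ha₀) with rfl | rfl
          · exact Or.inl rfl
          · exact Or.inr rfl
    -- finishing lemmas
    have finish₂ : ∀ u v : V, u ∈ Set.range ⇑f₁ → v ∈ Set.range ⇑f₁ → GoodFor G u v := by
      rintro u v ⟨a, rfl⟩ ⟨b, rfl⟩
      obtain ⟨D', hsub, hem | ⟨p', q', hdia⟩⟩ := hzgem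
      · exact Or.inl ⟨D', hem, hnotin₂ a D' hsub, hnotin₂ b D' hsub⟩
      · exact Or.inr ⟨D', p', q', hdia, fun hh => absurd hh (hnotin₂ a D' hsub),
          fun hh => absurd hh (hnotin₂ b D' hsub)⟩
    have finish₁ : ∀ u v : V,
        (u ∈ Set.range ⇑f₂ ∨ u = f₁ x ∨ u = f₁ y) →
        (v ∈ Set.range ⇑f₂ ∨ v = f₁ x ∨ v = f₁ y) → GoodFor G u v := by
      intro u v hu hv
      obtain ⟨D', hsub, ⟨hem, hx', hy'⟩ | ⟨p', q', hdia, hxp, hyp⟩⟩ := hxygem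
      · refine Or.inl ⟨D', hem, ?_, ?_⟩
        · rcases hu with ⟨c, rfl⟩ | rfl | rfl
          · exact hnotin₁ c D' hsub
          · exact hx'
          · exact hy'
        · rcases hv with ⟨c, rfl⟩ | rfl | rfl
          · exact hnotin₁ c D' hsub
          · exact hx'
          · exact hy'
      · refine Or.inr ⟨D', p', q', hdia, ?_, ?_⟩
        · rcases hu with ⟨c, rfl⟩ | rfl | rfl
          · exact fun hh => absurd hh (hnotin₁ c D' hsub)
          · exact hxp
          · exact hyp
        · rcases hv with ⟨c, rfl⟩ | rfl | rfl
          · exact fun hh => absurd hh (hnotin₁ c D' hsub)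
          · exact hxp
          · exact hyp
    constructor
    · intro u v huv
      rcases (hadj _ _).mp huv with ⟨a', b', ha, hb, _, _, _⟩ | ⟨a', b', ha, hb, _⟩ |
        ⟨w, hw, ⟨⟨h1, h2⟩ | ⟨h1, h2⟩, _⟩ | ⟨⟨h1, h2⟩ | ⟨h1, h2⟩, _⟩⟩
      · exact finish₂ u v ⟨a', ha⟩ ⟨b', hb⟩
      · exact finish₁ u v (Or.inl ⟨a', ha⟩) (Or.inl ⟨b', hb⟩)
      · exact finish₁ u v (Or.inr (Or.inl h1)) (Or.inl ⟨w, h2.symm⟩)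
      · exact finish₁ u v (Or.inl ⟨w, h2.symm⟩) (Or.inr (Or.inl h1))
      · exact finish₁ u v (Or.inr (Or.inr h1)) (Or.inl ⟨w, h2.symm⟩)
      · exact finish₁ u v (Or.inl ⟨w, h2.symm⟩) (Or.inr (Or.inr h1))
    · intro t
      have ht : t ∈ Set.range ⇑f₁ ∪ Set.range ⇑f₂ := by
        rw [huniv]; trivial
      rcases ht with ⟨c, rfl⟩ | ⟨c, rfl⟩
      · obtain ⟨D', hsub, hem | ⟨p', q', hdia⟩⟩ := hzgem
        · exact Or.inl ⟨D', hem, hnotin₂ c D' hsub⟩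
        · exact Or.inr ⟨D', p', q', hdia, hnotin₂ c D' hsub⟩
      · obtain ⟨D', hsub, ⟨hem, _, _⟩ | ⟨p', q', hdia, _, _⟩⟩ := hxygem
        · exact Or.inl ⟨D', hem, hnotin₁ c D' hsub⟩
        · exact Or.inr ⟨D', p', q', hdia, hnotin₁ c D' hsub⟩



/-- If `R` is an Ore-collapsible subset of a graph `G`, then there exists a diamond or an
emerald of `G` whose vertices lie in `R`. -/
theorem stmt_6 {V : Type} [Fintype V] (G : SimpleGraph V) (R : Set V)
    (h : OreCollapsible G R) :
    (∃ D : Set V, IsDiamond G D ∧ D ⊆ R) ∨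
    (∃ S : Set V, IsEmerald G S ∧ S ⊆ R) := by
  obtain ⟨hRuniv, u, v, hne, hnadj, hbd, h5⟩ := h
  have hne' : u ≠ v := fun hh => hne (congrArg Subtype.val hh)
  set H := addEdge (G.induce R) u v with hH
  have hsupAdj : ∀ a b : ↥R, H.Adj a b ↔
      (G.Adj a.1 b.1 ∨ (s(a, b) = s(u, v) ∧ a ≠ b)) := by
    intro a b
    rw [hH]
    unfold addEdge
    rw [SimpleGraph.sup_adj, SimpleGraph.fromEdgeSet_adj]
    simp only [SimpleGraph.comap_adj, Function.Embedding.coe_subtype, Set.mem_singleton_iff]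
  have hHuv : H.Adj u v := (hsupAdj u v).mpr (Or.inr ⟨rfl, hne'⟩)
  have hAdjHG : ∀ a b : ↥R, H.Adj a b → ¬(a = u ∧ b = v) → ¬(a = v ∧ b = u) →
      G.Adj a.1 b.1 := by
    intro a b hab hn1 hn2
    rcases (hsupAdj a b).mp hab with hg | ⟨hs, _⟩
    · exact hg
    · rcases Sym2.eq_iff.mp hs with ⟨h1, h2⟩ | ⟨h1, h2⟩
      · exact absurd ⟨h1, h2⟩ hn1
      · exact absurd ⟨h1, h2⟩ hn2
  have hDegHG : ∀ w : ↥R, w ≠ u → w ≠ v → degS G w.1 = degS H w := by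
    intro w hwu hwv
    have himg : G.neighborSet w.1 = Subtype.val '' (H.neighborSet w) := by
      ext n
      constructor
      · intro hn
        have hn' : G.Adj w.1 n := hn
        have hnR : n ∈ R := by
          by_contra hnR
          have hwb : w.1 ∈ boundary G R := ⟨w.2, n, hnR, hn'⟩
          rw [hbd] at hwb
          rcases hwb with hh | hh
          · exact hwu (Subtype.ext hh)
          · exact hwv (Subtype.ext hh)
        exact ⟨⟨n, hnR⟩, (hsupAdj w ⟨n, hnR⟩).mpr (Or.inl hn'), rfl⟩
      · rintro ⟨m, hm, rfl⟩
        exact hAdjHG w m hm (fun hh => hwu hh.1) (fun hh => hwv hh.1)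
    unfold degS
    rw [himg, Set.ncard_image_of_injective _ Subtype.val_injective]
  have hvalsub : ∀ D : Set ↥R, (Subtype.val '' D : Set V) ⊆ R := by
    rintro D n ⟨m, _, rfl⟩
    exact m.2
  rcases (key5ore h5).1 u v hHuv with ⟨D, hD, huD, hvD⟩ | ⟨D, p, q, hD, huD, hvD⟩
  · -- emerald case
    right
    refine ⟨Subtype.val '' D, ⟨?_, ?_, ?_⟩, hvalsub D⟩
    · rw [Set.ncard_image_of_injective _ Subtype.val_injective]; exact hD.1
    · rintro a ⟨a₀, ha₀, rfl⟩ b ⟨b₀, hb₀, rfl⟩ hab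
      have hne₀ : a₀ ≠ b₀ := fun hh => hab (congrArg Subtype.val hh)
      refine hAdjHG a₀ b₀ (hD.2.1 a₀ ha₀ b₀ hb₀ hne₀) ?_ ?_
      · rintro ⟨rfl, _⟩; exact huD ha₀
      · rintro ⟨rfl, _⟩; exact hvD ha₀
    · rintro n ⟨w₀, hw₀, rfl⟩
      have h1 : w₀ ≠ u := fun hh => huD (hh ▸ hw₀)
      have h2 : w₀ ≠ v := fun hh => hvD (hh ▸ hw₀)
      rw [hDegHG w₀ h1 h2]
      exact hD.2.2 w₀ hw₀
  · -- diamond case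
    left
    refine ⟨Subtype.val '' D, ⟨?_, p.1, ⟨p, hD.2.1, rfl⟩, q.1, ⟨q, hD.2.2.1, rfl⟩,
      fun hh => hD.2.2.2.1 (Subtype.ext hh), ?_, ?_⟩, hvalsub D⟩
    · rw [Set.ncard_image_of_injective _ Subtype.val_injective]; exact hD.1
    · rintro a ⟨a₀, ha₀, rfl⟩ b ⟨b₀, hb₀, rfl⟩ hab hn1 hn2
      have hne₀ : a₀ ≠ b₀ := fun hh => hab (congrArg Subtype.val hh)
      have hn1' : ¬(a₀ = p ∧ b₀ = q) := by
        rintro ⟨rfl, rfl⟩; exact hn1 ⟨rfl, rfl⟩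
      have hn2' : ¬(a₀ = q ∧ b₀ = p) := by
        rintro ⟨rfl, rfl⟩; exact hn2 ⟨rfl, rfl⟩
      have hadj₀ := hD.2.2.2.2.1 a₀ ha₀ b₀ hb₀ hne₀ hn1' hn2'
      refine hAdjHG a₀ b₀ hadj₀ ?_ ?_
      · rintro ⟨rfl, rfl⟩
        rcases huD ha₀ with rfl | rfl
        · rcases hvD hb₀ with rfl | rfl
          · exact hne₀ rfl
          · exact hn1' ⟨rfl, rfl⟩
        · rcases hvD hb₀ with rfl | rfl
          · exact hn2' ⟨rfl, rfl⟩
          · exact hne₀ rfl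
      · rintro ⟨rfl, rfl⟩
        rcases hvD ha₀ with rfl | rfl
        · rcases huD hb₀ with rfl | rfl
          · exact hne₀ rfl
          · exact hn1' ⟨rfl, rfl⟩
        · rcases huD hb₀ with rfl | rfl
          · exact hn2' ⟨rfl, rfl⟩
          · exact hne₀ rfl
    · rintro n ⟨w₀, hw₀, rfl⟩ hwp hwq
      have hwp' : w₀ ≠ p := fun hh => hwp (congrArg Subtype.val hh)
      have hwq' : w₀ ≠ q := fun hh => hwq (congrArg Subtype.val hh)
      have h1 : w₀ ≠ u := by
        rintro rfl
        rcases huD hw₀ with rfl | rfl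
        · exact hwp' rfl
        · exact hwq' rfl
      have h2 : w₀ ≠ v := by
        rintro rfl
        rcases hvD hw₀ with rfl | rfl
        · exact hwp' rfl
        · exact hwq' rfl
      rw [hDegHG w₀ h1 h2]
      exact hD.2.2.2.2.2 w₀ hw₀ hwp' hwq'

end Postle
end
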